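/- arXiv:0801.1650 — 4 statements merged into one kernel-verified Lean document; each statement's English description precedes it below -/
import Mathlib

section
/- If s and t are noncommuting generators (m(s,t) = 3) of a Coxeter group W, and both s and t lie in the left descent set of w ∈ W, then w has a reduced expression beginning with sts; in particular w is not fully commutative. -/
open Polynomial

/-- Bruhat order on a Coxeter group, via the subword property: `x ≤ w` iff some
reduced word for `w` has a subword whose product is `x`. -/
def BruhatLE {B W : Type*} {M : CoxeterMatrix B} [Group W] (cs : CoxeterSystem M W)
    (x w : W) : Prop :=
  ∃ ω : List B, cs.IsReduced ω ∧ cs.wordProd ω = w ∧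
    ∃ ω' : List B, ω'.Sublist ω ∧ cs.wordProd ω' = x

/-- Strict Bruhat order. -/
def BruhatLT {B W : Type*} {M : CoxeterMatrix B} [Group W] (cs : CoxeterSystem M W)
    (x w : W) : Prop :=
  BruhatLE cs x w ∧ x ≠ w

/-- `w` is fully commutative (Stembridge): no reduced expression for `w` contains a
factor `s t s` with `s, t` noncommuting generators with `m(s,t) = 3`. -/
def FullyCommutative {B W : Type*} {M : CoxeterMatrix B} [Group W] (cs : CoxeterSystem M W)
    (w : W) : Prop :=
  ∀ ω : List B, cs.IsReduced ω → cs.wordProd ω = w →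
    ¬ ∃ (l₁ l₂ : List B) (i j : B), M i j = 3 ∧ ω = l₁ ++ [i, j, i] ++ l₂

/-!
Let `s = sᵢ`, `t = sⱼ`. By the exchange property, two distinct left descents `s, t` of `w`
give `ℓ(tsw) = ℓ(stw) = ℓ(w) - 2`. If `s` were not a left descent of `tsw`, then
`x = stsw = tstw` would have both `s` and `t` as left descents and `ℓ(x) = ℓ(w) - 1`; so
`ℓ(tsx) = ℓ(x) - 2`, which is absurd since `tsx = sw`. Hence `ℓ(stsw) = ℓ(w) - 3`, and `sts`
followed by a reduced word for `stsw` is a reduced word for `w`.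

Two representations of `W` do the work: the geometric representation separates the simple
reflections (so `s ≠ t`), and Tits' representation on `W × ℤ/2`, which counts modulo 2 the
occurrences of a reflection in the left inversion sequence of a word, gives the exchange property.
-/

section Rotation

open Real

theorem Real.sin_add_two_mul (t x : ℝ) : sin (t + 2 * x) = 2 * cos x * sin (t + x) - sin t := by
  have h₁ := sin_add (t + x) x
  have h₂ := sin_sub (t + x) x
  rw [add_sub_cancel_right] at h₂
  rw [show t + 2 * x = t + x + x by ring, h₁]
  linarith

variable {V : Type*} [AddCommGroup V] [Module ℝ V] {A : Module.End ℝ V} {e f : V} {θ : ℝ}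

/- The hypotheses say that `A` acts on the span of `e` and `f` as a rotation by `2θ`: it shifts
the parameter `t` of `sin (t + θ) • e + sin t • f` by `2θ`. -/
theorem pow_apply_sin_smul_add_sin_smul
    (he : A e = (4 * cos θ ^ 2 - 1) • e + (2 * cos θ) • f) (hf : A f = -(2 * cos θ) • e - f)
    (n : ℕ) (t : ℝ) :
    (A ^ n) (sin (t + θ) • e + sin t • f) =
      sin (t + 2 * n * θ + θ) • e + sin (t + 2 * n * θ) • f := by
  induction n generalizing t with
  | zero => simp
  | succ n ih =>
    have step :
        A (sin (t + θ) • e + sin t • f) = sin (t + 2 * θ + θ) • e + sin (t + 2 * θ) • f := by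
      have h₁ := sin_add_two_mul t θ
      have h₂ := sin_add_two_mul (t + θ) θ
      rw [show t + θ + θ = t + 2 * θ by ring, h₁] at h₂
      rw [map_add, map_smul, map_smul, he, hf, show t + 2 * θ + θ = t + θ + 2 * θ by ring, h₂,
        h₁]
      module
    rw [pow_succ, Module.End.mul_apply, step, ih]
    push_cast
    ring_nf

theorem pow_apply_eq_self_of_rotation
    (he : A e = (4 * cos θ ^ 2 - 1) • e + (2 * cos θ) • f) (hf : A f = -(2 * cos θ) • e - f)
    {m : ℕ} (hm : m * θ = π) (hθ : sin θ ≠ 0) : (A ^ m) e = e ∧ (A ^ m) f = f := by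
  have hfix : ∀ t, (A ^ m) (sin (t + θ) • e + sin t • f) = sin (t + θ) • e + sin t • f := by
    intro t
    rw [pow_apply_sin_smul_add_sin_smul he hf,
      show t + 2 * m * θ = t + 2 * π by rw [mul_assoc, hm], sin_add_two_pi,
      show t + 2 * π + θ = (t + θ) + 2 * π by ring, sin_add_two_pi]
  have h₀ := hfix 0
  have h₁ := hfix (-θ)
  simp only [zero_add, sin_zero, zero_smul, add_zero, neg_add_cancel, sin_neg, neg_smul, map_neg,
    map_smul] at h₀ h₁
  exact ⟨smul_right_injective V hθ h₀, smul_right_injective V hθ (neg_injective h₁)⟩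

end Rotation

namespace CoxeterMatrix

open Real

variable {B : Type*} (M : CoxeterMatrix B)

/- The Gram matrix `-cos (π / m)` of the geometric representation. For `m = ∞`, encoded as
`M k l = 0`, the junk value `π / 0 = 0` yields the correct entry `-1`. -/
noncomputable def cosForm (k l : B) : ℝ := -cos (π / M k l)

theorem cosForm_self (k : B) : M.cosForm k k = 1 := by simp [cosForm]

theorem cosForm_comm (k l : B) : M.cosForm k l = M.cosForm l k := by
  simp [cosForm, M.symmetric k l]

noncomputable def geomPairing (k : B) : (B →₀ ℝ) →ₗ[ℝ] ℝ :=
  Finsupp.linearCombination ℝ (M.cosForm k)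

@[simp]
theorem geomPairing_single (k l : B) : M.geomPairing k (Finsupp.single l 1) = M.cosForm k l := by
  simp [geomPairing]

noncomputable def geomReflection (k : B) : Module.End ℝ (B →₀ ℝ) :=
  LinearMap.id - (2 • M.geomPairing k).smulRight (Finsupp.single k 1)

theorem geomReflection_apply (k : B) (v : B →₀ ℝ) :
    M.geomReflection k v = v - (2 * M.geomPairing k v) • Finsupp.single k 1 := by
  simp [geomReflection]

theorem geomReflection_mul_self (k : B) : M.geomReflection k * M.geomReflection k = 1 := by
  refine LinearMap.ext fun v => ?_
  simp only [Module.End.mul_apply, geomReflection_apply, map_sub, map_smul, geomPairing_single,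
    cosForm_self, Module.End.one_apply]
  module

theorem geomReflection_apply_of_geomPairing_eq_zero {k : B} {v : B →₀ ℝ}
    (hv : M.geomPairing k v = 0) : M.geomReflection k v = v := by
  simp [geomReflection_apply, hv]

theorem geomReflection_mul_pow_of_ne {k l : B} (hkl : k ≠ l) (hm : M k l ≠ 0) :
    (M.geomReflection k * M.geomReflection l) ^ M k l = 1 := by
  set A := M.geomReflection k * M.geomReflection l
  set θ := π / M k l with hθ
  have hmθ : M k l * θ = π := by rw [hθ]; field_simp
  have hsin : 0 < sin θ := by
    have : 1 < (M k l : ℝ) := by have := M.off_diagonal k l hkl; norm_cast; omega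
    exact sin_pos_of_pos_of_lt_pi (by positivity) (div_lt_self pi_pos this)
  have hc : M.cosForm k l = -cos θ := rfl
  have hc' : M.cosForm l k = -cos θ := by rw [cosForm_comm, hc]
  set e : B →₀ ℝ := Finsupp.single k 1
  set f : B →₀ ℝ := Finsupp.single l 1
  have he : A e = (4 * cos θ ^ 2 - 1) • e + (2 * cos θ) • f := by
    simp only [A, e, f, Module.End.mul_apply, geomReflection_apply, map_sub, map_smul,
      geomPairing_single, cosForm_self, hc, hc']
    module
  have hf : A f = -(2 * cos θ) • e - f := by
    simp only [A, e, f, Module.End.mul_apply, geomReflection_apply, map_sub, map_smul,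
      geomPairing_single, cosForm_self, hc]
    module
  obtain ⟨hAe, hAf⟩ := pow_apply_eq_self_of_rotation he hf hmθ hsin.ne'
  -- `v` is a combination of `e, f` plus a vector `z` fixed by both reflections; solving for the
  -- coefficients inverts the Gram matrix of `e, f`, whose determinant is `sin θ ^ 2`.
  refine LinearMap.ext fun v => ?_
  set pk := M.geomPairing k v
  set pl := M.geomPairing l v
  have hs2 : sin θ ^ 2 ≠ 0 := by positivity
  set x := (pk + cos θ * pl) / sin θ ^ 2
  set y := (pl + cos θ * pk) / sin θ ^ 2
  set z := v - x • e - y • f with hz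
  have hzk : M.geomPairing k z = 0 := by
    simp only [z, e, f, x, y, map_sub, map_smul, geomPairing_single, cosForm_self, hc, smul_eq_mul]
    field_simp
    linear_combination pk * sin_sq_add_cos_sq θ
  have hzl : M.geomPairing l z = 0 := by
    simp only [z, e, f, x, y, map_sub, map_smul, geomPairing_single, cosForm_self, hc', smul_eq_mul]
    field_simp
    linear_combination pl * sin_sq_add_cos_sq θ
  have hAz : A z = z := by
    rw [Module.End.mul_apply, geomReflection_apply_of_geomPairing_eq_zero _ hzl,
      geomReflection_apply_of_geomPairing_eq_zero _ hzk]
  have hv : v = x • e + y • f + z := by rw [hz]; abel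
  rw [Module.End.one_apply, hv, map_add, map_add, map_smul, map_smul, hAe, hAf,
    Module.End.pow_apply, Function.iterate_fixed hAz]

theorem isLiftable_geomReflection : M.IsLiftable M.geomReflection := by
  intro k l
  obtain rfl | hkl := eq_or_ne k l
  · rw [M.diagonal, pow_one, geomReflection_mul_self]
  obtain hm | hm := eq_or_ne (M k l) 0
  · rw [hm, pow_zero]
  exact M.geomReflection_mul_pow_of_ne hkl hm

end CoxeterMatrix

namespace CoxeterSystem

variable {B W : Type*} [Group W] {M : CoxeterMatrix B} (cs : CoxeterSystem M W)

theorem simple_injective : Function.Injective cs.simple := by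
  intro i j hij
  by_contra hne
  have hσ : M.geomReflection i = M.geomReflection j := by
    rw [← cs.lift_apply_simple M.isLiftable_geomReflection, hij, cs.lift_apply_simple]
  have := congrArg (fun σ => σ (Finsupp.single j 1) j) hσ
  simp only [CoxeterMatrix.geomReflection_apply, Finsupp.sub_apply, Finsupp.smul_apply,
    CoxeterMatrix.geomPairing_single, CoxeterMatrix.cosForm_self, Finsupp.single_eq_same,
    Finsupp.single_eq_of_ne (Ne.symm hne)] at this
  norm_num at this

open scoped Classical in
noncomputable def parityReflection (k : B) : Function.End (W × ZMod 2) :=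
  fun p => (cs.simple k * p.1 * cs.simple k, p.2 + if p.1 = cs.simple k then 1 else 0)

noncomputable def wordParity (ω : List B) : Function.End (W × ZMod 2) :=
  (ω.map cs.parityReflection).prod

open scoped Classical in
theorem count_leftInvSeq_cons (k : B) (ω : List B) (t : W) :
    (cs.leftInvSeq (k :: ω)).count (MulAut.conj (cs.simple k) t) =
      (cs.leftInvSeq ω).count t + if t = cs.simple k then 1 else 0 := by
  have hlis : cs.leftInvSeq (k :: ω) =
      cs.simple k :: (cs.leftInvSeq ω).map (MulAut.conj (cs.simple k)) := rfl
  have hfix : cs.simple k = MulAut.conj (cs.simple k) t ↔ t = cs.simple k :=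
    eq_comm.trans <| (MulAut.conj _).injective.eq_iff' (by simp)
  simp only [hlis, List.count_cons, List.count_map_of_injective _ _ (MulAut.conj _).injective,
    beq_iff_eq, hfix]

open scoped Classical in
theorem wordParity_apply (ω : List B) (p : W × ZMod 2) :
    cs.wordParity ω p = (cs.wordProd ω * p.1 * (cs.wordProd ω)⁻¹,
      p.2 + ((cs.leftInvSeq ω).count (cs.wordProd ω * p.1 * (cs.wordProd ω)⁻¹) : ZMod 2)) := by
  induction ω with
  | nil => simp [wordParity]; rfl
  | cons k ω ih =>
    set u := cs.wordProd ω * p.1 * (cs.wordProd ω)⁻¹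
    have hconj : cs.wordProd (k :: ω) * p.1 * (cs.wordProd (k :: ω))⁻¹ =
        MulAut.conj (cs.simple k) u := by
      simp only [u, wordProd_cons, MulAut.conj_apply, mul_inv_rev, inv_simple]
      group
    change cs.parityReflection k (cs.wordParity ω p) = _
    rw [ih, hconj, count_leftInvSeq_cons]
    push_cast [parityReflection, MulAut.conj_apply, inv_simple, add_assoc]
    rfl

theorem parityReflection_mul_pow (k l : B) (n : ℕ) :
    (cs.parityReflection k * cs.parityReflection l) ^ n =
      cs.wordParity (alternatingWord k l (2 * n)) := by
  induction n with
  | zero => rfl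
  | succ n ih =>
    rw [pow_succ', ih, show 2 * (n + 1) = 2 * n + 1 + 1 by ring, alternatingWord_succ',
      alternatingWord_succ']
    simp [wordParity, mul_assoc]

theorem leftInvSeq_alternatingWord (k l : B) (p : ℕ) :
    cs.leftInvSeq (alternatingWord k l (2 * p)) =
      (List.range (2 * p)).map fun r => cs.simple k * (cs.simple l * cs.simple k) ^ r := by
  refine List.ext_getElem (by simp) fun r h _ => ?_
  rw [getElem_leftInvSeq_alternatingWord cs k l p r (by simpa using h), List.getElem_map,
    List.getElem_range, prod_alternatingWord_eq_mul_pow]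
  simp [show (2 * r + 1) / 2 = r by omega]

/- The left inversion sequence of the braid word `(k l)^m` is periodic with period `m`, so every
reflection occurs in it an even number of times. -/
open scoped Classical in
theorem isLiftable_parityReflection : M.IsLiftable cs.parityReflection := by
  intro k l
  set g : ℕ → W := fun r => cs.simple k * (cs.simple l * cs.simple k) ^ r
  have hperiodic : ∀ r, g (M k l + r) = g r := fun r => by
    simp only [g, pow_add, simple_mul_simple_pow', one_mul]
  have hlis : cs.leftInvSeq (alternatingWord k l (2 * M k l)) =
      (List.range (M k l)).map g ++ (List.range (M k l)).map g := by
    rw [leftInvSeq_alternatingWord, two_mul, List.range_add, List.map_append, List.map_map]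
    congr 2
    exact funext hperiodic
  have hprod : cs.wordProd (alternatingWord k l (2 * M k l)) = 1 := by
    simp [prod_alternatingWord_eq_mul_pow]
  funext p
  rw [parityReflection_mul_pow, wordParity_apply, hprod, hlis, List.count_append]
  simp only [mul_one, one_mul, inv_one, Nat.cast_add, CharTwo.add_self_eq_zero, add_zero]
  rfl

noncomputable def parityRep : W →* Function.End (W × ZMod 2) :=
  cs.lift ⟨cs.parityReflection, cs.isLiftable_parityReflection⟩

theorem parityRep_wordProd (ω : List B) : cs.parityRep (cs.wordProd ω) = cs.wordParity ω := by
  simp [parityRep, wordParity, wordProd, map_list_prod, Function.comp_def]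

open scoped Classical in
theorem cast_count_leftInvSeq_eq_of_wordProd_eq {ω ω' : List B} (h : cs.wordProd ω = cs.wordProd ω')
    (t : W) : ((cs.leftInvSeq ω).count t : ZMod 2) = (cs.leftInvSeq ω').count t := by
  have hparity : cs.wordParity ω = cs.wordParity ω' := by
    rw [← parityRep_wordProd, h, parityRep_wordProd]
  have := congrArg (fun φ => (φ ((cs.wordProd ω)⁻¹ * t * cs.wordProd ω, 0)).2) hparity
  simp only [wordParity_apply] at this
  simpa [← h, mul_assoc] using this

theorem simple_mem_leftInvSeq_of_isLeftDescent {ω : List B} {i : B}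
    (hi : cs.IsLeftDescent (cs.wordProd ω) i) : cs.simple i ∈ cs.leftInvSeq ω := by
  classical
  obtain ⟨α, hα, hαprod⟩ := cs.exists_isReduced (cs.simple i * cs.wordProd ω)
  have hprod : cs.wordProd (i :: α) = cs.wordProd ω := by
    rw [wordProd_cons, ← hαprod, simple_mul_simple_cancel_left]
  have hnotin : cs.simple i ∉ cs.leftInvSeq α := fun hmem => by
    have := (cs.isLeftInversion_of_mem_leftInvSeq hα hmem).2
    rw [← hαprod, simple_mul_simple_cancel_left] at this
    exact lt_asymm hi this
  -- `sᵢ` occurs exactly once in the left inversion sequence of `i :: α`, hence an odd number of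
  -- times in that of `ω`.
  have hcount := cs.count_leftInvSeq_cons i α (cs.simple i)
  rw [MulAut.conj_apply, mul_inv_cancel_right, List.count_eq_zero.mpr hnotin,
    if_pos rfl] at hcount
  have hparity := cs.cast_count_leftInvSeq_eq_of_wordProd_eq hprod (cs.simple i)
  rw [hcount] at hparity
  by_contra hmem
  rw [List.count_eq_zero.mpr hmem] at hparity
  simp at hparity

theorem exists_eraseIdx_of_isLeftDescent {ω : List B} {i : B}
    (hi : cs.IsLeftDescent (cs.wordProd ω) i) :
    ∃ k < ω.length, cs.simple i * cs.wordProd ω = cs.wordProd (ω.eraseIdx k) := by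
  obtain ⟨k, hk, hget⟩ := List.getElem_of_mem (cs.simple_mem_leftInvSeq_of_isLeftDescent hi)
  refine ⟨k, by simpa using hk, ?_⟩
  rw [← cs.getD_leftInvSeq_mul_wordProd, List.getD_eq_getElem _ _ hk, hget]

theorem simple_mul_simple_mul_simple_mul_of_eq_three {i j : B} (hij : M i j = 3) (w : W) :
    cs.simple i * (cs.simple j * (cs.simple i * w)) =
      cs.simple j * (cs.simple i * (cs.simple j * w)) := by
  have := cs.wordProd_braidWord_eq i j
  rw [braidWord, braidWord, M.symmetric j i, hij] at this
  simpa [alternatingWord, wordProd, mul_assoc] using congrArg (· * w) this.symm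

theorem length_simple_mul_simple_mul_add_two {w : W} {i j : B} (hne : i ≠ j)
    (hi : cs.IsLeftDescent w i) (hj : cs.IsLeftDescent w j) :
    cs.length (cs.simple j * (cs.simple i * w)) + 2 = cs.length w := by
  rw [isLeftDescent_iff] at hi hj
  obtain ⟨α, hα, hαprod⟩ := cs.exists_isReduced (cs.simple j * w)
  have hw : w = cs.wordProd (j :: α) := by
    rw [wordProd_cons, ← hαprod, simple_mul_simple_cancel_left]
  obtain ⟨_ | k, hk, hexch⟩ := cs.exists_eraseIdx_of_isLeftDescent (ω := j :: α) (i := i)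
    (by rw [← hw, isLeftDescent_iff]; exact hi)
  · rw [← hw, List.eraseIdx_cons_zero, ← hαprod] at hexch
    exact absurd (cs.simple_injective (mul_right_cancel hexch)) hne
  · rw [← hw, List.eraseIdx_cons_succ, wordProd_cons] at hexch
    have hle := cs.length_wordProd_le (α.eraseIdx k)
    rw [List.length_eraseIdx_of_lt (by simpa using hk),
      ← cs.simple_mul_simple_cancel_left (w := cs.wordProd _) j, ← hexch] at hle
    have hαlen : α.length + 1 = cs.length w := by rw [← hα.eq, ← hαprod, hj]
    rcases cs.length_simple_mul (cs.simple i * w) j with h | h <;> omega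

theorem length_simple_mul_simple_mul_simple_mul_add_three {w : W} {i j : B} (hij : M i j = 3)
    (hi : cs.IsLeftDescent w i) (hj : cs.IsLeftDescent w j) :
    cs.length (cs.simple i * (cs.simple j * (cs.simple i * w))) + 3 = cs.length w := by
  have hne : i ≠ j := by
    rintro rfl
    simp at hij
  have hji := cs.length_simple_mul_simple_mul_add_two hne hi hj
  have hij' := cs.length_simple_mul_simple_mul_add_two hne.symm hj hi
  rw [isLeftDescent_iff] at hi
  suffices hdesc : cs.IsLeftDescent (cs.simple j * (cs.simple i * w)) i by
    rw [isLeftDescent_iff] at hdesc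
    omega
  by_contra hasc
  rw [not_isLeftDescent_iff] at hasc
  set x := cs.simple i * (cs.simple j * (cs.simple i * w)) with hx
  have hsix : cs.simple i * x = cs.simple j * (cs.simple i * w) := by
    rw [hx, simple_mul_simple_cancel_left]
  have hsjx : cs.simple j * x = cs.simple i * (cs.simple j * w) := by
    rw [hx, simple_mul_simple_mul_simple_mul_of_eq_three cs hij, simple_mul_simple_cancel_left]
  have hxi : cs.IsLeftDescent x i := by
    rw [IsLeftDescent, hsix]
    omega
  have hxj : cs.IsLeftDescent x j := by
    rw [IsLeftDescent, hsjx]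
    omega
  have hx2 := cs.length_simple_mul_simple_mul_add_two hne hxi hxj
  rw [hsix, simple_mul_simple_cancel_left] at hx2
  omega

end CoxeterSystem

/-- If `s = sᵢ` and `t = sⱼ` are noncommuting generators with `m(s,t) = 3` and both
are left descents of `w`, then `w` has a reduced expression beginning with `s t s`;
in particular `w` is not fully commutative. -/
theorem reduced_word_starts_sts_of_descents
    {B W : Type*} {M : CoxeterMatrix B} [Group W] (cs : CoxeterSystem M W)
    (i j : B) (hij : M i j = 3) (w : W)
    (hi : cs.IsLeftDescent w i) (hj : cs.IsLeftDescent w j) :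
    (∃ ω : List B, cs.IsReduced (i :: j :: i :: ω) ∧ cs.wordProd (i :: j :: i :: ω) = w) ∧
      ¬ FullyCommutative cs w := by
  have hlen := cs.length_simple_mul_simple_mul_simple_mul_add_three hij hi hj
  obtain ⟨β, hβ, hβprod⟩ := cs.exists_isReduced (cs.simple i * (cs.simple j * (cs.simple i * w)))
  have hprod : cs.wordProd (i :: j :: i :: β) = w := by
    simp only [cs.wordProd_cons, ← hβprod, cs.simple_mul_simple_cancel_left]
  have hred : cs.IsReduced (i :: j :: i :: β) := by
    rw [CoxeterSystem.IsReduced, hprod, ← hlen, hβprod, hβ.eq, List.length_cons,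
      List.length_cons, List.length_cons]
  exact ⟨⟨β, hred, hprod⟩, fun hFC => hFC _ hred hprod ⟨[], β, i, j, hij, rfl⟩⟩
end

section
/- Let x, w ∈ W with x < w, and suppose there exists a generator s ∈ L(w) \ L(x) (in the left descent set of w but not of x). Then either μ(x, w) = 0, or both x = sw and μ(x, w) = 1. -/
open Polynomial

open scoped Classical

/-- The leading Kazhdan–Lusztig coefficient `μ(x,w)` attached to a family `P` of
polynomials: the coefficient of `q^((ℓ(w)-ℓ(x)-1)/2)` in `P x w` when `x < w` and this
exponent is a genuine natural number (i.e. `ℓ(w) - ℓ(x)` is odd), and `0` otherwise. -/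

noncomputable def klMu {B W : Type*} {M : CoxeterMatrix B} [Group W] (cs : CoxeterSystem M W)
    (P : W → W → Polynomial ℤ) (x w : W) : ℤ :=
  if BruhatLT cs x w ∧ Odd (cs.length w - cs.length x) then
    (P x w).coeff ((cs.length w - cs.length x - 1) / 2)
  else 0

/-- The family of Kazhdan–Lusztig polynomials of a Coxeter system, characterized by the
defining properties from Kazhdan–Lusztig (Invent. Math. 53 (1979)): `P_{w,w} = 1`,
`P_{x,w} = 0` unless `x ≤ w`, the degree bound `deg P_{x,w} ≤ (ℓ(w)-ℓ(x)-1)/2` for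
`x < w`, and the defining recursion. -/
structure KLData {B W : Type*} {M : CoxeterMatrix B} [Group W] (cs : CoxeterSystem M W) where
  P : W → W → Polynomial ℤ
  P_refl : ∀ w : W, P w w = 1
  P_not_le : ∀ x w : W, ¬ BruhatLE cs x w → P x w = 0
  P_degree : ∀ x w : W, BruhatLT cs x w →
    2 * (P x w).natDegree + 1 ≤ cs.length w - cs.length x
  P_rec : ∀ (x w : W) (i : B), cs.IsLeftDescent w i →
    P x w =
      Polynomial.X ^ (1 - (if cs.IsLeftDescent x i then 1 else 0)) *
          P (cs.simple i * x) (cs.simple i * w)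
        + Polynomial.X ^ (if cs.IsLeftDescent x i then 1 else 0) * P x (cs.simple i * w)
        - ∑ᶠ z ∈ {z : W | klMu cs P z (cs.simple i * w) ≠ 0 ∧ cs.IsLeftDescent z i},
            Polynomial.C (klMu cs P z (cs.simple i * w)) *
              Polynomial.X ^ ((cs.length w - cs.length z) / 2) * P x z

/-!
For `s ∈ L(w)` and `s ∉ L(x)` one has `P_{x,w} = P_{sx,w}`: in the recursions for both along `s`
the first two terms are swapped, and the correction sums agree by induction on `ℓ(w)`. So `μ(x,w)`
is a coefficient of `P_{sx,w}`, where `ℓ(sx) = ℓ(x) + 1` and the degree bound kills it unless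
`sx = w`.
-/

namespace CoxeterSystem

variable {B W : Type*} {M : CoxeterMatrix B} [Group W] {cs : CoxeterSystem M W}

theorem BruhatLE.length_le {x w : W} (h : BruhatLE cs x w) : cs.length x ≤ cs.length w := by
  obtain ⟨ω, hred, rfl, ω', hsub, rfl⟩ := h
  calc cs.length (cs.wordProd ω') ≤ ω'.length := cs.length_wordProd_le ω'
    _ ≤ ω.length := hsub.length_le
    _ = cs.length (cs.wordProd ω) := hred.symm

theorem bruhatLT_of_klMu_ne_zero {P : W → W → Polynomial ℤ} {x w : W}
    (h : klMu cs P x w ≠ 0) : BruhatLT cs x w := by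
  by_contra hlt
  exact h (if_neg fun hc => hlt hc.1)

end CoxeterSystem

namespace KLData

open CoxeterSystem

variable {B W : Type*} {M : CoxeterMatrix B} [Group W] {cs : CoxeterSystem M W}

theorem P_eq_P_simple_mul (K : KLData cs) {x w : W} {i : B} (hw : cs.IsLeftDescent w i)
    (hx : ¬ cs.IsLeftDescent x i) : K.P x w = K.P (cs.simple i * x) w := by
  have hsx : cs.IsLeftDescent (cs.simple i * x) i :=
    cs.isLeftDescent_iff_not_isLeftDescent_mul.mpr (by rwa [cs.simple_mul_simple_cancel_left])
  rw [K.P_rec x w i hw, K.P_rec _ w i hw, if_neg hx, if_pos hsx, cs.simple_mul_simple_cancel_left]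
  congr 1
  · ring
  · exact finsum_mem_congr rfl fun z hz => by rw [K.P_eq_P_simple_mul hz.2 hx]
termination_by cs.length w
decreasing_by
  have hzw := (bruhatLT_of_klMu_ne_zero hz.1).1.length_le
  have hsw := cs.isLeftDescent_iff.mp hw
  omega

theorem coeff_P_eq_zero (K : KLData cs) {y w : W} {n : ℕ} (hne : y ≠ w)
    (hn : cs.length w - cs.length y ≤ 2 * n) : (K.P y w).coeff n = 0 := by
  by_cases hle : BruhatLE cs y w
  · have hdeg := K.P_degree y w ⟨hle, hne⟩
    exact coeff_eq_zero_of_natDegree_lt (by omega)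
  · rw [K.P_not_le y w hle, coeff_zero]

end KLData

theorem klMu_of_left_descent_difference_general
    {B W : Type*} {M : CoxeterMatrix B} [Group W] (cs : CoxeterSystem M W)
    (K : KLData cs) (x w : W) (i : B)
    (hw : cs.IsLeftDescent w i) (hx : ¬ cs.IsLeftDescent x i) :
    klMu cs K.P x w = 0 ∨ (x = cs.simple i * w ∧ klMu cs K.P x w = 1) := by
  unfold klMu
  split_ifs with h
  · rw [K.P_eq_P_simple_mul hw hx]
    have hsx : cs.length (cs.simple i * x) = cs.length x + 1 := cs.not_isLeftDescent_iff.mp hx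
    by_cases hxw : cs.simple i * x = w
    · subst hxw
      refine Or.inr ⟨(cs.simple_mul_simple_cancel_left i).symm, ?_⟩
      rw [K.P_refl, hsx, Nat.add_sub_cancel_left, Nat.sub_self, Nat.zero_div, coeff_one_zero]
    · obtain ⟨k, hk⟩ := h.2
      exact Or.inl (K.coeff_P_eq_zero hxw (by omega))
  · exact Or.inl rfl

/-- If `x < w` and some simple generator `s = sᵢ` is a left descent of `w` but not of
`x`, then either `μ(x, w) = 0`, or both `x = s * w` and `μ(x, w) = 1`. -/
theorem klMu_of_left_descent_difference
    {B W : Type*} {M : CoxeterMatrix B} [Group W] (cs : CoxeterSystem M W)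
    (K : KLData cs) (x w : W) (hlt : BruhatLT cs x w) (i : B)
    (hw : cs.IsLeftDescent w i) (hx : ¬ cs.IsLeftDescent x i) :
    klMu cs K.P x w = 0 ∨ (x = cs.simple i * w ∧ klMu cs K.P x w = 1) :=
  klMu_of_left_descent_difference_general cs K x w i hw hx
end

section
/- Suppose n is even and let w in W(affine A_{n-1}) be an alternating product of I_0 and I_1 of length k (i.e., w = I_{i} I_{1−i} ⋯ with k factors). Then ℓ(w) = k·(n/2), and the starting factor index i and ending factor index are determined by L(w) and R(w) respectively. -/
open Polynomial

/-- `M` is the Coxeter matrix of type affine `A_{n-1}`, with generators indexed by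
`ZMod n`: `m(i,i) = 1`, `m(i,j) = 3` if `i - j ≡ ±1 (mod n)`, and `m(i,j) = 2`
otherwise. -/
def IsAffineAMatrix (n : ℕ) (M : CoxeterMatrix (ZMod n)) : Prop :=
  ∀ i j : ZMod n, M i j = if i = j then 1 else if i = j + 1 ∨ j = i + 1 then 3 else 2
/-- The set `S_0` (for `b = false`) resp. `S_1` (for `b = true`) of generators of
even resp. odd index in type affine `A_{n-1}`. -/
def parityGenSet (n : ℕ) (b : Bool) : Set (ZMod n) :=
  {i : ZMod n | ∃ k : ℕ, k < n ∧ k % 2 = b.toNat ∧ (k : ZMod n) = i}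

/-- The element `I_0` (for `b = false`) resp. `I_1` (for `b = true`): the product of
the pairwise commuting generators of even resp. odd index. -/
def Iprod {n : ℕ} {W : Type*} {M : CoxeterMatrix (ZMod n)} [Group W]
    (cs : CoxeterSystem M W) (b : Bool) : W :=
  cs.wordProd (((List.range n).filter (fun k => k % 2 = b.toNat)).map (Nat.cast))

/-- The alternating product `I_b I_{!b} I_b ⋯` with `k` factors. -/
def altProd {n : ℕ} {W : Type*} {M : CoxeterMatrix (ZMod n)} [Group W]
    (cs : CoxeterSystem M W) : Bool → ℕ → W
  | _, 0 => 1
  | b, k + 1 => Iprod cs b * altProd cs (!b) k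


/-!
The Coxeter group acts on `ℤ` by affine permutations: `s_i` exchanges `x` and `x + 1` for every
`x ≡ i (mod n)`. For such a permutation `g` let `D(g) = ∑_{r mod n} |g r - r|`. Left
multiplication by `s_i` changes at most two of the summands, each by one, so `D(w) ≤ 2 ℓ(w)`.
For even `n`, `I_b` moves every `x ≡ b (mod 2)` up by one and every other `x` down by one, so the
alternating product of `k` factors moves every integer by exactly `k`; hence `D = n k` and
`ℓ ≥ k (n / 2)`, which is the length of the defining word.

If `i` has the parity of the first factor, `s_i` cancels against a letter of `I_b`, so it is a
left descent. Otherwise `s_i` acts on the image of each integer like the next factor `I_{!b}`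
would, or not at all, and it does act on one residue class; so `D(s_i w) ≥ n k + 1 > 2 ℓ(w)` and
`s_i` is not a descent. Right descents follow by inverting, since each `I_b` is an involution.
-/

namespace AffinePerm

variable {n : ℕ}

def subgroup (n : ℕ) : Subgroup (Equiv.Perm ℤ) where
  carrier := {g | ∀ x, g (x + n) = g x + n}
  one_mem' _ := rfl
  mul_mem' {g h} hg hh x := by
    change g (h (x + n)) = g (h x) + n
    rw [hh x, hg]
  inv_mem' {g} hg x := by
    change g⁻¹ (x + n) = g⁻¹ x + n
    rw [Equiv.Perm.inv_eq_iff_eq, hg, Equiv.Perm.coe_inv, Equiv.apply_symm_apply]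

section Subgroup

variable {g h : Equiv.Perm ℤ}

theorem apply_add_mul (hg : g ∈ subgroup n) (x m : ℤ) : g (x + m * n) = g x + m * n := by
  induction m using Int.induction_on with
  | zero => simp
  | succ m ih => rw [add_mul, one_mul, ← add_assoc, hg, ih, add_assoc]
  | pred m ih =>
    have := hg (x + (-m - 1) * n)
    rw [show x + (-m - 1) * n + n = x + -m * n by ring, ih] at this
    linarith

theorem intCast_apply_eq_intCast_apply (hg : g ∈ subgroup n) {x y : ℤ}
    (hxy : (x : ZMod n) = y) : (g x : ZMod n) = g y := by
  obtain ⟨m, hm⟩ := (ZMod.intCast_eq_intCast_iff_dvd_sub x y n).mp hxy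
  rw [show y = x + m * n by linarith, apply_add_mul hg]
  simp

theorem intCast_apply_eq_intCast_apply_iff (hg : g ∈ subgroup n) {x y : ℤ} :
    (g x : ZMod n) = g y ↔ (x : ZMod n) = y := by
  refine ⟨fun h => ?_, intCast_apply_eq_intCast_apply hg⟩
  simpa using intCast_apply_eq_intCast_apply (inv_mem hg) h

theorem eq_of_forall_Ico [NeZero n] (hg : g ∈ subgroup n) (hh : h ∈ subgroup n) (r : ℤ)
    (hgh : ∀ x, r ≤ x → x < r + n → g x = h x) : g = h := by
  have hn : (0 : ℤ) < n := by have := NeZero.pos n; omega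
  ext x
  have hx : x = r + (x - r) % n + (x - r) / n * n := by
    have := Int.emod_add_mul_ediv (x - r) n; linarith
  rw [hx, apply_add_mul hg, apply_add_mul hh,
    hgh _ (by have := Int.emod_nonneg (x - r) hn.ne'; omega)
      (by have := Int.emod_lt_of_pos (x - r) hn; omega)]

def displacement (n : ℕ) [NeZero n] (g : Equiv.Perm ℤ) : ℤ :=
  ∑ a : ZMod n, |g a.val - a.val|

theorem bijective_residue [NeZero n] (hg : g ∈ subgroup n) :
    Function.Bijective fun a : ZMod n => ((g a.val : ℤ) : ZMod n) :=
  Finite.injective_iff_bijective.mp fun a b h => by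
    simpa using (intCast_apply_eq_intCast_apply_iff hg).mp h

theorem sum_residue_eq_one [NeZero n] (hg : g ∈ subgroup n) (c : ZMod n) :
    ∑ a : ZMod n, (if ((g a.val : ℤ) : ZMod n) = c then 1 else 0 : ℤ) = 1 := by
  rw [(bijective_residue hg).sum_comp fun b => if b = c then (1 : ℤ) else 0]
  simp

end Subgroup

theorem intCast_eq_intCast_iff_of_lt {y z : ℤ} (h₁ : z - n < y) (h₂ : y < z + n) :
    (y : ZMod n) = z ↔ y = z := by
  refine ⟨fun h => ?_, congrArg _⟩
  have := Int.eq_zero_of_abs_lt_dvd ((ZMod.intCast_eq_intCast_iff_dvd_sub y z n).mp h)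
    (by rw [abs_lt]; omega)
  omega

section Simple

variable [Fact (1 < n)] {i j : ZMod n} {x : ℤ}

def simple (n : ℕ) [Fact (1 < n)] (i : ZMod n) : Equiv.Perm ℤ :=
  Function.Involutive.toPerm
    (fun x => if (x : ZMod n) = i then x + 1 else if (x : ZMod n) = i + 1 then x - 1 else x)
    (by
      intro x
      by_cases h : (x : ZMod n) = i
      · simp [h]
      by_cases h' : (x : ZMod n) = i + 1
      · simp [h']
      · simp [h, h'])

theorem simple_apply (i : ZMod n) (x : ℤ) :
    simple n i x = if (x : ZMod n) = i then x + 1 else if (x : ZMod n) = i + 1 then x - 1 else x :=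
  rfl

theorem simple_apply_of_eq (h : (x : ZMod n) = i) : simple n i x = x + 1 := if_pos h

theorem simple_apply_of_eq_add_one (h : (x : ZMod n) = i + 1) : simple n i x = x - 1 := by
  rw [simple_apply, if_neg (by simp [h]), if_pos h]

theorem simple_apply_of_ne (h : (x : ZMod n) ≠ i) (h' : (x : ZMod n) ≠ i + 1) :
    simple n i x = x := by
  rw [simple_apply, if_neg h, if_neg h']

theorem simple_mul_self (i : ZMod n) : simple n i * simple n i = 1 :=
  Equiv.ext fun x => (simple n i).left_inv x

theorem simple_inv (i : ZMod n) : (simple n i)⁻¹ = simple n i :=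
  inv_eq_of_mul_eq_one_right (simple_mul_self i)

theorem simple_mem_subgroup (i : ZMod n) : simple n i ∈ subgroup n := by
  intro x
  simp only [simple_apply, Int.cast_add, Int.cast_natCast, ZMod.natCast_self, add_zero]
  split_ifs <;> ring

theorem simple_apply_eq_swap {r y : ℤ} (hr : (r : ZMod n) = i) (h₁ : r + 1 - n < y)
    (h₂ : y < r + n) : simple n i y = Equiv.swap r (r + 1) y := by
  have e₁ : (y : ZMod n) = i ↔ y = r :=
    hr ▸ intCast_eq_intCast_iff_of_lt (by omega) (by omega)
  have e₂ : (y : ZMod n) = i + 1 ↔ y = r + 1 := by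
    rw [← hr, ← Int.cast_one, ← Int.cast_add]
    exact intCast_eq_intCast_iff_of_lt (by omega) (by omega)
  rw [simple_apply, Equiv.swap_apply_def]
  simp only [e₁, e₂]
  split_ifs <;> omega

theorem simple_mul_simple_add_one_pow_three (hn : 2 < n) (i : ZMod n) :
    (simple n i * simple n (i + 1)) ^ 3 = 1 := by
  obtain ⟨r, hr⟩ := ZMod.intCast_surjective i
  have hr' : ((r + 1 : ℤ) : ZMod n) = i + 1 := by push_cast [hr]; rfl
  set t := simple n i * simple n (i + 1)
  -- on the window `[r, r + n)`, `t` is the 3-cycle `r ↦ r + 1 ↦ r + 2 ↦ r`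
  have ht {y : ℤ} (h₁ : r ≤ y) (h₂ : y < r + n) :
      t y = Equiv.swap r (r + 1) (Equiv.swap (r + 1) (r + 1 + 1) y) := by
    rw [Equiv.Perm.mul_apply, simple_apply_eq_swap hr' (by omega) (by omega),
      simple_apply_eq_swap hr]
    all_goals rw [Equiv.swap_apply_def]; split_ifs <;> omega
  refine eq_of_forall_Ico
    (pow_mem (mul_mem (simple_mem_subgroup i) (simple_mem_subgroup (i + 1))) 3) (one_mem _) r
    fun x h₁ h₂ => ?_
  simp only [pow_succ, pow_zero, one_mul, Equiv.Perm.mul_apply, Equiv.Perm.one_apply]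
  obtain rfl | rfl | rfl | h₃ : x = r ∨ x = r + 1 ∨ x = r + 1 + 1 ∨ r + 3 ≤ x := by omega
  all_goals simp (disch := omega) only [ht, Equiv.swap_apply_left, Equiv.swap_apply_right,
    Equiv.swap_apply_of_ne_of_ne]

theorem disjoint_simple (hij : i ≠ j) (h₁ : i ≠ j + 1) (h₂ : j ≠ i + 1) :
    (simple n i).Disjoint (simple n j) := by
  intro x
  by_cases hx : (x : ZMod n) = i
  · exact .inr (simple_apply_of_ne (hx ▸ hij) (hx ▸ h₁))
  by_cases hx' : (x : ZMod n) = i + 1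
  · exact .inr (simple_apply_of_ne (hx' ▸ h₂.symm) (by simpa [hx'] using hij))
  · exact .inl (simple_apply_of_ne hx hx')

theorem isLiftable_simple {M : CoxeterMatrix (ZMod n)} (hM : IsAffineAMatrix n M) (hn : 2 < n) :
    M.IsLiftable (simple n) := by
  intro i j
  rw [hM]
  split_ifs with h h'
  · rw [h, pow_one, simple_mul_self]
  · rcases h' with rfl | rfl
    · rw [← inv_inj, ← inv_pow, mul_inv_rev, simple_inv, simple_inv, inv_one,
        simple_mul_simple_add_one_pow_three hn]
    · exact simple_mul_simple_add_one_pow_three hn i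
  · push Not at h'
    rw [(disjoint_simple h h'.1 h'.2).commute.mul_pow, sq, sq, simple_mul_self, simple_mul_self,
      one_mul]

theorem abs_simple_apply_sub_le (i : ZMod n) (x y : ℤ) :
    |simple n i y - x| ≤
      |y - x| + (if (y : ZMod n) = i then 1 else 0) + (if (y : ZMod n) = i + 1 then 1 else 0) := by
  rw [simple_apply]
  split_ifs <;> rw [abs_le] <;> constructor <;> cases abs_cases (y - x) <;> linarith

theorem displacement_simple_mul_le {g : Equiv.Perm ℤ} (hg : g ∈ subgroup n) (i : ZMod n) :
    displacement n (simple n i * g) ≤ displacement n g + 2 := by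
  calc displacement n (simple n i * g)
      ≤ ∑ a : ZMod n, (|g a.val - a.val| + (if ((g a.val : ℤ) : ZMod n) = i then 1 else 0)
          + (if ((g a.val : ℤ) : ZMod n) = i + 1 then 1 else 0)) :=
        Finset.sum_le_sum fun a _ => abs_simple_apply_sub_le i _ _
    _ = displacement n g + 2 := by
        rw [Finset.sum_add_distrib, Finset.sum_add_distrib, sum_residue_eq_one hg,
          sum_residue_eq_one hg, displacement]
        ring

theorem prod_map_simple_apply {l : List (ZMod n)}
    (hl : l.Pairwise fun a b => a ≠ b ∧ a + 1 ≠ b ∧ b + 1 ≠ a) (x : ℤ) :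
    (l.map (simple n)).prod x =
      if (x : ZMod n) ∈ l then x + 1
      else if ((x - 1 : ℤ) : ZMod n) ∈ l then x - 1 else x := by
  induction l with
  | nil => simp
  | cons a l ih =>
    obtain ⟨ha, hl⟩ := List.pairwise_cons.mp hl
    have hx : ((x - 1 : ℤ) : ZMod n) + 1 = x := by push_cast; ring
    rw [List.map_cons, List.prod_cons, Equiv.Perm.mul_apply, ih hl]
    simp only [List.mem_cons]
    by_cases h₁ : (x : ZMod n) ∈ l
    · obtain ⟨hne, -, hadj⟩ := ha _ h₁
      rw [if_pos h₁, if_pos (.inr h₁), simple_apply_of_ne (by push_cast; exact hadj)]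
      push_cast
      exact fun h => hne (add_right_cancel h).symm
    by_cases h₂ : ((x - 1 : ℤ) : ZMod n) ∈ l
    · obtain ⟨hne, hadj, hadj'⟩ := ha _ h₂
      rw [if_neg h₁, if_pos h₂, if_neg (not_or.mpr ⟨by rwa [← hx], h₁⟩),
        if_pos (.inr h₂), simple_apply_of_ne hne.symm hadj.symm]
    rw [if_neg h₁, if_neg h₂]
    by_cases h₃ : (x : ZMod n) = a
    · rw [if_pos (.inl h₃), simple_apply_of_eq h₃]
    by_cases h₄ : ((x - 1 : ℤ) : ZMod n) = a
    · rw [if_neg (by tauto), if_pos (.inl h₄), simple_apply_of_eq_add_one (by rw [← hx, h₄])]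
    · rw [if_neg (by tauto), if_neg (by tauto),
        simple_apply_of_ne h₃ (fun h => h₄ (by rw [← add_right_cancel_iff (a := 1), hx, h]))]

end Simple

end AffinePerm

def parityWord (n : ℕ) (b : Bool) : List (ZMod n) :=
  ((List.range n).filter (fun k => k % 2 = b.toNat)).map Nat.cast

section Parity

variable {n : ℕ}

theorem mem_parityWord {a : ZMod n} {b : Bool} :
    a ∈ parityWord n b ↔ a ∈ parityGenSet n b := by
  simp [parityWord, parityGenSet, and_assoc]

theorem length_parityWord (hev : Even n) (b : Bool) : (parityWord n b).length = n / 2 := by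
  have h := Nat.count_modEq_card (b := n) two_pos b.toNat
  rw [Nat.mod_eq_of_lt (Bool.toNat_lt b), Nat.even_iff.mp hev, if_neg (Nat.not_lt_zero _),
    add_zero] at h
  rw [parityWord, List.length_map, ← List.countP_eq_length_filter, ← h, Nat.count]
  congr! 3
  rw [Nat.ModEq, Nat.mod_eq_of_lt (Bool.toNat_lt b)]

theorem nodup_parityWord (b : Bool) : (parityWord n b).Nodup := by
  refine (List.nodup_range.filter _).map_on fun k hk l hl h => ?_
  simp only [List.mem_filter, List.mem_range] at hk hl
  rwa [ZMod.natCast_eq_natCast_iff', Nat.mod_eq_of_lt hk.1, Nat.mod_eq_of_lt hl.1] at h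

variable [NeZero n]

theorem mem_parityGenSet_iff {a : ZMod n} {b : Bool} :
    a ∈ parityGenSet n b ↔ a.val % 2 = b.toNat := by
  constructor
  · rintro ⟨k, hk, hkb, rfl⟩
    rwa [ZMod.val_natCast_of_lt hk]
  · exact fun h => ⟨a.val, a.val_lt, h, ZMod.natCast_zmod_val a⟩

theorem intCast_mem_parityGenSet_iff (hev : Even n) {x : ℤ} {b : Bool} :
    (x : ZMod n) ∈ parityGenSet n b ↔ x % 2 = b.toNat := by
  have h2 : (2 : ℤ) ∣ n := by exact_mod_cast hev.two_dvd
  have := ZMod.val_intCast (n := n) x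
  rw [mem_parityGenSet_iff, ← Int.emod_emod_of_dvd x h2, ← this]
  omega

theorem add_one_notMem_parityGenSet (hev : Even n) {a : ZMod n} {b : Bool}
    (ha : a ∈ parityGenSet n b) : a + 1 ∉ parityGenSet n b := by
  obtain ⟨x, rfl⟩ := ZMod.intCast_surjective a
  rw [← Int.cast_one, ← Int.cast_add, intCast_mem_parityGenSet_iff hev]
  rw [intCast_mem_parityGenSet_iff hev] at ha
  omega

end Parity

section Alternating

variable {n : ℕ} {W : Type*} [Group W] {M : CoxeterMatrix (ZMod n)} (cs : CoxeterSystem M W)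

theorem Iprod_eq_wordProd (b : Bool) : Iprod cs b = cs.wordProd (parityWord n b) := rfl

theorem length_altProd_le (hev : Even n) (b : Bool) (k : ℕ) :
    cs.length (altProd cs b k) ≤ k * (n / 2) := by
  induction k generalizing b with
  | zero => simp [altProd]
  | succ k ih =>
    calc cs.length (altProd cs b (k + 1))
        ≤ cs.length (Iprod cs b) + cs.length (altProd cs (!b) k) := cs.length_mul_le _ _
      _ ≤ n / 2 + k * (n / 2) :=
          add_le_add ((cs.length_wordProd_le _).trans_eq (length_parityWord hev b)) (ih _)
      _ = (k + 1) * (n / 2) := by ring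

theorem altProd_succ_right (b : Bool) (k : ℕ) :
    altProd cs b (k + 1) = altProd cs b k * Iprod cs (if Even k then b else !b) := by
  induction k generalizing b with
  | zero => simp [altProd]
  | succ k ih =>
    rw [altProd, ih, altProd, mul_assoc]
    rcases Nat.even_or_odd k with hk | hk
    · simp [hk, Nat.even_add_one]
    · simp [Nat.not_even_iff_odd.mpr hk, Nat.even_add_one]

variable [NeZero n]

theorem commute_simple_of_mem_parityGenSet (hM : IsAffineAMatrix n M) (hev : Even n)
    {i j : ZMod n} {b : Bool} (hi : i ∈ parityGenSet n b) (hj : j ∈ parityGenSet n b) :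
    Commute (cs.simple i) (cs.simple j) := by
  obtain rfl | hij := eq_or_ne i j
  · exact Commute.refl _
  have hM2 : M i j = 2 := by
    rw [hM, if_neg hij, if_neg]
    rintro (rfl | rfl)
    exacts [add_one_notMem_parityGenSet hev hj hi, add_one_notMem_parityGenSet hev hi hj]
  have := cs.simple_mul_simple_pow i j
  rwa [hM2, sq, mul_eq_one_iff_eq_inv, mul_inv_rev, cs.inv_simple, cs.inv_simple] at this

theorem Iprod_inv (hM : IsAffineAMatrix n M) (hev : Even n) (b : Bool) :
    (Iprod cs b)⁻¹ = Iprod cs b := by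
  rw [Iprod_eq_wordProd, ← cs.wordProd_reverse]
  refine ((List.reverse_perm _).map cs.simple).prod_eq' (List.pairwise_of_forall_mem_list ?_)
  simp only [List.mem_map, List.mem_reverse, mem_parityWord]
  rintro _ ⟨i, hi, rfl⟩ _ ⟨j, hj, rfl⟩
  exact commute_simple_of_mem_parityGenSet cs hM hev hi hj

theorem altProd_inv (hM : IsAffineAMatrix n M) (hev : Even n) (b : Bool) (k : ℕ) :
    (altProd cs b k)⁻¹ = altProd cs (if Even k then !b else b) k := by
  induction k generalizing b with
  | zero => simp [altProd]
  | succ k ih =>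
    rw [altProd, mul_inv_rev, ih, Iprod_inv cs hM hev, altProd_succ_right]
    rcases Nat.even_or_odd k with hk | hk
    · simp [hk, Nat.even_add_one]
    · simp [Nat.not_even_iff_odd.mpr hk, Nat.even_add_one]

theorem length_simple_mul_Iprod_lt (hM : IsAffineAMatrix n M) (hev : Even n) {i : ZMod n}
    {b : Bool} (hi : i ∈ parityGenSet n b) : cs.length (cs.simple i * Iprod cs b) < n / 2 := by
  obtain ⟨ω, ω', hω⟩ := List.append_of_mem (mem_parityWord.mpr hi)
  have hcomm : Commute (cs.simple i) (cs.wordProd ω) :=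
    Commute.list_prod_right _ _ fun _ hx => by
      obtain ⟨j, hj, rfl⟩ := List.mem_map.mp hx
      exact commute_simple_of_mem_parityGenSet cs hM hev hi
        (mem_parityWord.mp (hω ▸ List.mem_append_left _ hj))
  have heq : cs.simple i * Iprod cs b = cs.wordProd (ω ++ ω') := by
    rw [Iprod_eq_wordProd, hω, cs.wordProd_append, cs.wordProd_cons, cs.wordProd_append,
      ← mul_assoc, hcomm.eq, mul_assoc, cs.simple_mul_simple_cancel_left]
  have hlen := congrArg List.length hω
  rw [length_parityWord hev, List.length_append, List.length_cons] at hlen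
  rw [heq]
  exact (cs.length_wordProd_le _).trans_lt (by rw [List.length_append]; omega)

end Alternating

namespace AffinePerm

section Representation

variable {n : ℕ} [Fact (1 < n)] {W : Type*} [Group W] {M : CoxeterMatrix (ZMod n)}
  (cs : CoxeterSystem M W) (hM : IsAffineAMatrix n M) (hn : 2 < n)

def rep : W →* Equiv.Perm ℤ := cs.lift ⟨simple n, isLiftable_simple hM hn⟩

theorem rep_simple (i : ZMod n) : rep cs hM hn (cs.simple i) = simple n i :=
  cs.lift_apply_simple _ i

theorem rep_wordProd (ω : List (ZMod n)) :
    rep cs hM hn (cs.wordProd ω) = (ω.map (simple n)).prod := by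
  induction ω with
  | nil => simp
  | cons i ω ih => rw [cs.wordProd_cons, map_mul, ih, rep_simple, List.map_cons, List.prod_cons]

theorem rep_mem_subgroup (w : W) : rep cs hM hn w ∈ subgroup n := by
  induction w using cs.simple_induction with
  | simple i => exact rep_simple cs hM hn i ▸ simple_mem_subgroup i
  | one => exact map_one (rep cs hM hn) ▸ one_mem _
  | mul w w' hw hw' => exact map_mul (rep cs hM hn) w w' ▸ mul_mem hw hw'

theorem displacement_rep_wordProd_le (ω : List (ZMod n)) :
    displacement n (rep cs hM hn (cs.wordProd ω)) ≤ 2 * ω.length := by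
  induction ω with
  | nil => simp [displacement]
  | cons i ω ih =>
    rw [cs.wordProd_cons, map_mul, rep_simple, List.length_cons]
    have := displacement_simple_mul_le (rep_mem_subgroup cs hM hn (cs.wordProd ω)) i
    push_cast
    linarith

theorem displacement_rep_le (w : W) : displacement n (rep cs hM hn w) ≤ 2 * cs.length w := by
  obtain ⟨ω, hω, rfl⟩ := cs.exists_isReduced w
  rw [hω.eq]
  exact displacement_rep_wordProd_le cs hM hn ω

theorem rep_Iprod_apply (hev : Even n) (b : Bool) (x : ℤ) :
    rep cs hM hn (Iprod cs b) x = if x % 2 = b.toNat then x + 1 else x - 1 := by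
  have hl : (parityWord n b).Pairwise fun a c => a ≠ c ∧ a + 1 ≠ c ∧ c + 1 ≠ a :=
    (nodup_parityWord b).imp_of_mem fun ha hc hne =>
      ⟨hne, fun h => add_one_notMem_parityGenSet hev (mem_parityWord.mp ha)
          (h ▸ mem_parityWord.mp hc),
        fun h => add_one_notMem_parityGenSet hev (mem_parityWord.mp hc)
          (h ▸ mem_parityWord.mp ha)⟩
  rw [Iprod_eq_wordProd, rep_wordProd, prod_map_simple_apply hl]
  simp only [mem_parityWord, intCast_mem_parityGenSet_iff hev]
  have := Bool.toNat_le b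
  split_ifs <;> omega

theorem rep_altProd_apply (hev : Even n) (b : Bool) (k : ℕ) (x : ℤ) :
    rep cs hM hn (altProd cs b k) x = if (x + k) % 2 = (!b).toNat then x + k else x - k := by
  induction k generalizing b with
  | zero => simp [altProd]
  | succ k ih =>
    rw [altProd, map_mul, Equiv.Perm.mul_apply, ih, rep_Iprod_apply cs hM hn hev]
    cases b <;> simp only [Bool.not_false, Bool.not_true, Bool.toNat_false, Bool.toNat_true] <;>
      push_cast <;> split_ifs <;> omega

theorem abs_rep_altProd_apply_sub (hev : Even n) (b : Bool) (k : ℕ) (x : ℤ) :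
    |rep cs hM hn (altProd cs b k) x - x| = k := by
  rw [rep_altProd_apply cs hM hn hev]
  split_ifs <;> simp

theorem displacement_rep_altProd (hev : Even n) (b : Bool) (k : ℕ) :
    displacement n (rep cs hM hn (altProd cs b k)) = n * k := by
  simp [displacement, abs_rep_altProd_apply_sub cs hM hn hev]

theorem simple_apply_eq_rep_Iprod_apply (hev : Even n) {i : ZMod n} {b : Bool}
    (hi : i ∈ parityGenSet n b) {y : ℤ} (hy : (y : ZMod n) = i ∨ (y : ZMod n) = i + 1) :
    simple n i y = rep cs hM hn (Iprod cs b) y := by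
  rw [rep_Iprod_apply cs hM hn hev]
  rcases hy with hy | hy
  · rw [simple_apply_of_eq hy, if_pos ((intCast_mem_parityGenSet_iff hev).mp (hy ▸ hi))]
  · have hy' : ((y - 1 : ℤ) : ZMod n) = i := by push_cast; rw [hy, add_sub_cancel_right]
    have := (intCast_mem_parityGenSet_iff hev).mp (hy' ▸ hi)
    rw [simple_apply_of_eq_add_one hy, if_neg (by omega)]

theorem displacement_simple_mul_rep_altProd_ge (hev : Even n) {i : ZMod n} {b : Bool}
    (hi : i ∈ parityGenSet n (!b)) (k : ℕ) :
    n * k + 1 ≤ displacement n (simple n i * rep cs hM hn (altProd cs b k)) := by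
  set g := rep cs hM hn (altProd cs b k)
  have hterm (a : ZMod n) :
      k + (if ((g a.val : ℤ) : ZMod n) = i then 1 else 0) ≤ |simple n i (g a.val) - a.val| := by
    by_cases hy : ((g a.val : ℤ) : ZMod n) = i ∨ ((g a.val : ℤ) : ZMod n) = i + 1
    · -- here `s_i` moves `g a` one step further, exactly as the next factor `I_{!b}` would
      have : simple n i (g a.val) = rep cs hM hn (altProd cs (!b) (k + 1)) a.val := by
        rw [simple_apply_eq_rep_Iprod_apply cs hM hn hev hi hy, altProd, Bool.not_not, map_mul,
          Equiv.Perm.mul_apply]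
      rw [this, abs_rep_altProd_apply_sub cs hM hn hev]
      split_ifs <;> push_cast <;> linarith
    · rw [not_or] at hy
      rw [simple_apply_of_ne hy.1 hy.2, abs_rep_altProd_apply_sub cs hM hn hev, if_neg hy.1,
        add_zero]
  calc (n * k + 1 : ℤ)
      = ∑ a : ZMod n, (k + if ((g a.val : ℤ) : ZMod n) = i then 1 else 0 : ℤ) := by
        rw [Finset.sum_add_distrib, sum_residue_eq_one (rep_mem_subgroup cs hM hn _)]
        simp
    _ ≤ displacement n (simple n i * g) := Finset.sum_le_sum fun a _ => hterm a

end Representation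

end AffinePerm

section Descents

open AffinePerm

variable {n : ℕ} {W : Type*} [Group W] {M : CoxeterMatrix (ZMod n)} (cs : CoxeterSystem M W)

theorem length_altProd (hM : IsAffineAMatrix n M) (hn : 2 < n) (hev : Even n) (b : Bool)
    (k : ℕ) : cs.length (altProd cs b k) = k * (n / 2) := by
  have : Fact (1 < n) := ⟨by omega⟩
  refine (length_altProd_le cs hev b k).antisymm ?_
  have h := displacement_rep_le cs hM hn (altProd cs b k)
  rw [displacement_rep_altProd cs hM hn hev] at h
  have hn2 := Nat.two_mul_div_two_of_even hev
  have : n * k ≤ 2 * cs.length (altProd cs b k) := by exact_mod_cast h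
  nlinarith

theorem not_isLeftDescent_altProd (hM : IsAffineAMatrix n M) (hn : 2 < n) (hev : Even n)
    {b : Bool} (k : ℕ) {i : ZMod n} (hi : i ∈ parityGenSet n (!b)) :
    ¬cs.IsLeftDescent (altProd cs b k) i := by
  have : Fact (1 < n) := ⟨by omega⟩
  have hup := displacement_simple_mul_rep_altProd_ge cs hM hn hev hi k
  have hlen := displacement_rep_le cs hM hn (cs.simple i * altProd cs b k)
  rw [map_mul, rep_simple] at hlen
  have hn2 := Nat.two_mul_div_two_of_even hev
  have : n * k + 1 ≤ 2 * cs.length (cs.simple i * altProd cs b k) := by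
    exact_mod_cast hup.trans hlen
  rw [CoxeterSystem.IsLeftDescent, length_altProd cs hM hn hev, not_lt]
  nlinarith

theorem isLeftDescent_altProd (hM : IsAffineAMatrix n M) (hn : 2 < n) (hev : Even n)
    {b : Bool} (k : ℕ) {i : ZMod n} (hi : i ∈ parityGenSet n b) :
    cs.IsLeftDescent (altProd cs b (k + 1)) i := by
  have : NeZero n := ⟨by omega⟩
  have := length_simple_mul_Iprod_lt cs hM hev hi
  have := length_altProd_le cs hev (!b) k
  calc cs.length (cs.simple i * altProd cs b (k + 1))
      ≤ cs.length (cs.simple i * Iprod cs b) + cs.length (altProd cs (!b) k) := by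
        rw [altProd, ← mul_assoc]; exact cs.length_mul_le _ _
    _ < n / 2 + k * (n / 2) := by omega
    _ = cs.length (altProd cs b (k + 1)) := by rw [length_altProd cs hM hn hev]; ring

theorem isLeftDescent_altProd_iff (hM : IsAffineAMatrix n M) (hn : 2 < n) (hev : Even n)
    {b : Bool} {k : ℕ} (hk : 1 ≤ k) {i : ZMod n} :
    cs.IsLeftDescent (altProd cs b k) i ↔ i ∈ parityGenSet n b := by
  have : NeZero n := ⟨by omega⟩
  refine ⟨fun hdesc => ?_, fun hi => ?_⟩
  · by_contra hi
    refine not_isLeftDescent_altProd cs hM hn hev k ?_ hdesc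
    rw [mem_parityGenSet_iff] at hi ⊢
    cases b <;> simp at hi ⊢ <;> omega
  · obtain ⟨k, rfl⟩ : ∃ k', k = k' + 1 := ⟨k - 1, by omega⟩
    exact isLeftDescent_altProd cs hM hn hev k hi

theorem isRightDescent_altProd_iff (hM : IsAffineAMatrix n M) (hn : 2 < n) (hev : Even n)
    {b : Bool} {k : ℕ} (hk : 1 ≤ k) {i : ZMod n} :
    cs.IsRightDescent (altProd cs b k) i ↔ i ∈ parityGenSet n (if Even k then !b else b) := by
  have : NeZero n := ⟨by omega⟩
  rw [← cs.isLeftDescent_inv_iff, altProd_inv cs hM hev,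
    isLeftDescent_altProd_iff cs hM hn hev hk]

end Descents

/-- In type affine `A_{n-1}` with `n` even, the alternating product of `I₀` and `I₁`
with `k ≥ 1` factors starting with `I_b` has length `k·(n/2)`, its left descent set is
`S_b` (determined by the first factor), and its right descent set is determined by the
last factor. -/
theorem altProd_length_and_descents
    {n : ℕ} (hn : 4 ≤ n) (hev : Even n) {W : Type*} {M : CoxeterMatrix (ZMod n)} [Group W]
    (hM : IsAffineAMatrix n M) (cs : CoxeterSystem M W) (b : Bool) (k : ℕ) (hk : 1 ≤ k) :
    cs.length (altProd cs b k) = k * (n / 2) ∧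
    {i : ZMod n | cs.IsLeftDescent (altProd cs b k) i} = parityGenSet n b ∧
    {i : ZMod n | cs.IsRightDescent (altProd cs b k) i} =
      parityGenSet n (if Even k then !b else b) := by
  have hn' : 2 < n := by omega
  refine ⟨length_altProd cs hM hn' hev b k, ?_, ?_⟩ <;> ext i
  · exact isLeftDescent_altProd_iff cs hM hn' hev hk
  · exact isRightDescent_altProd_iff cs hM hn' hev hk
end

section
/- Let w be a fully commutative element of W(affine A_{n-1}), n ≥ 3, with w ≠ 1. Then at least one of the following holds: (i) w is a product of pairwise commuting generators; (ii) n is even and w is an alternating product of I_0 and I_1; (iii) w = stv reduced for some noncommuting generators s, t, and tv lies in the same left {s,t}-string as w (so that applying a left star operation decreases length); (iv) w = vts reduced for some noncommuting generators s, t with the analogous right-handed property. -/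
/-!
Take a reduced word for `w` and peel off its Cartier–Foata layers `E₁, E₂, …`: each layer
consists of pairwise commuting distinct generators, and every letter of a layer has a neighbour
in the layer before it. With a single layer, `w` is as in (i). If a letter `f` of `E₂` has only
one neighbour `s` in `E₁`, then `s f` can be moved to the front of the word, and full
commutativity makes the left star operation length-decreasing: (iii). Otherwise full
commutativity propagates "both neighbours lie in the previous layer" from layer to layer,
because between two occurrences of a generator both of its neighbours must occur. In the last
layer, a letter `e` with `e + 2` missing can be moved to the end together with `e + 1`: (iv).
Otherwise the last layer is stable under `+ 2` and has no two adjacent letters, so `n` is even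
and it is a parity class; then so is, alternately, every earlier layer, which is (ii).
-/

open Polynomial

namespace List

variable {α : Type*} (r : α → α → Prop) [DecidableRel r]

/-- Splits `l` into the letters not `r`-related to any letter of `seen` or any earlier letter of
`l`, and the others. For `seen = []` and the dependence relation of a trace monoid, the first
part is the first layer of the Cartier–Foata normal form. -/
def splitMinimal : List α → List α → List α × List α
  | _, [] => ([], [])
  | seen, a :: t =>
    if ∀ x ∈ seen, ¬ r x a then
      (a :: (splitMinimal (a :: seen) t).1, (splitMinimal (a :: seen) t).2)
    else ((splitMinimal (a :: seen) t).1, a :: (splitMinimal (a :: seen) t).2)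

variable {r}

theorem splitMinimal_cons_of_forall {seen t : List α} {a : α} (h : ∀ x ∈ seen, ¬ r x a) :
    splitMinimal r seen (a :: t) =
      (a :: (splitMinimal r (a :: seen) t).1, (splitMinimal r (a :: seen) t).2) := by
  rw [splitMinimal, if_pos h]

theorem splitMinimal_cons_of_not_forall {seen t : List α} {a : α} (h : ¬ ∀ x ∈ seen, ¬ r x a) :
    splitMinimal r seen (a :: t) =
      ((splitMinimal r (a :: seen) t).1, a :: (splitMinimal r (a :: seen) t).2) := by
  rw [splitMinimal, if_neg h]

theorem length_splitMinimal (seen l : List α) :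
    (splitMinimal r seen l).1.length + (splitMinimal r seen l).2.length = l.length := by
  induction l generalizing seen with
  | nil => simp [splitMinimal]
  | cons a t ih =>
    have := ih (a :: seen)
    by_cases h : ∀ x ∈ seen, ¬ r x a
    · simp only [splitMinimal_cons_of_forall h, length_cons]; omega
    · simp only [splitMinimal_cons_of_not_forall h, length_cons]; omega

theorem splitMinimal_fst_ne_nil {l : List α} (hl : l ≠ []) : (splitMinimal r [] l).1 ≠ [] := by
  cases l with
  | nil => exact absurd rfl hl
  | cons a t => simp [splitMinimal]

theorem not_rel_of_mem_splitMinimal_fst {seen l : List α} {y : α}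
    (hy : y ∈ (splitMinimal r seen l).1) : ∀ x ∈ seen, ¬ r x y := by
  induction l generalizing seen with
  | nil => simp [splitMinimal] at hy
  | cons a t ih =>
    by_cases h : ∀ x ∈ seen, ¬ r x a
    · simp only [splitMinimal_cons_of_forall h, mem_cons] at hy
      rcases hy with rfl | hy
      · exact h
      · exact fun x hx => ih hy x (mem_cons_of_mem _ hx)
    · simp only [splitMinimal_cons_of_not_forall h] at hy
      exact fun x hx => ih hy x (mem_cons_of_mem _ hx)

theorem pairwise_splitMinimal_fst (seen l : List α) :
    (splitMinimal r seen l).1.Pairwise fun a b => ¬ r a b := by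
  induction l generalizing seen with
  | nil => simp [splitMinimal]
  | cons a t ih =>
    by_cases h : ∀ x ∈ seen, ¬ r x a
    · simp only [splitMinimal_cons_of_forall h, pairwise_cons]
      exact ⟨fun y hy => not_rel_of_mem_splitMinimal_fst hy a mem_cons_self, ih _⟩
    · simpa only [splitMinimal_cons_of_not_forall h] using ih _

theorem exists_eq_append_cons_of_mem_splitMinimal_fst {seen l : List α} {f : α}
    (hf : f ∈ (splitMinimal r seen l).1) : ∃ C D, l = C ++ f :: D ∧ ∀ y ∈ C, ¬ r y f := by
  induction l generalizing seen with
  | nil => simp [splitMinimal] at hf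
  | cons a t ih =>
    have step : f ∈ (splitMinimal r (a :: seen) t).1 →
        ∃ C D, a :: t = C ++ f :: D ∧ ∀ y ∈ C, ¬ r y f := fun hf' => by
      obtain ⟨C, D, rfl, hC⟩ := ih hf'
      refine ⟨a :: C, D, rfl, ?_⟩
      simpa [not_rel_of_mem_splitMinimal_fst hf' a mem_cons_self] using hC
    by_cases h : ∀ x ∈ seen, ¬ r x a
    · simp only [splitMinimal_cons_of_forall h, mem_cons] at hf
      rcases hf with rfl | hf
      · exact ⟨[], t, rfl, by simp⟩
      · exact step hf
    · simp only [splitMinimal_cons_of_not_forall h] at hf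
      exact step hf

theorem splitMinimal_fst_subset_of_subset {seen seen' : List α} (hsub : seen' ⊆ seen)
    (l : List α) : (splitMinimal r seen l).1 ⊆ (splitMinimal r seen' l).1 := by
  induction l generalizing seen seen' with
  | nil => simp [splitMinimal]
  | cons a t ih =>
    have ih' := ih (cons_subset_cons a hsub)
    by_cases h : ∀ x ∈ seen, ¬ r x a
    · have h' : ∀ x ∈ seen', ¬ r x a := fun x hx => h x (hsub hx)
      simpa only [splitMinimal_cons_of_forall h, splitMinimal_cons_of_forall h'] using
        cons_subset_cons a ih'
    · rw [splitMinimal_cons_of_not_forall h]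
      by_cases h' : ∀ x ∈ seen', ¬ r x a
      · rw [splitMinimal_cons_of_forall h']
        exact fun x hx => mem_cons_of_mem _ (ih' hx)
      · rwa [splitMinimal_cons_of_not_forall h']

theorem exists_rel_of_mem_splitMinimal_snd {seen l : List α} {f : α}
    (hf : f ∈ (splitMinimal r [] (splitMinimal r seen l).2).1) :
    ∃ s ∈ seen ++ (splitMinimal r seen l).1, r s f := by
  induction l generalizing seen with
  | nil => simp [splitMinimal] at hf
  | cons a t ih =>
    by_cases h : ∀ x ∈ seen, ¬ r x a
    · simp only [splitMinimal_cons_of_forall h] at hf ⊢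
      obtain ⟨s, hs, hsf⟩ := ih hf
      exact ⟨s, by simp only [mem_append, mem_cons] at hs ⊢; tauto, hsf⟩
    · rw [splitMinimal_cons_of_not_forall h, splitMinimal_cons_of_forall (by simp),
        mem_cons] at hf
      rcases hf with rfl | hf
      · obtain ⟨x, hx, hxf⟩ : ∃ x ∈ seen, r x f := by simpa using h
        exact ⟨x, mem_append_left _ hx, hxf⟩
      · have hna : ¬ r a f := not_rel_of_mem_splitMinimal_fst hf a mem_cons_self
        obtain ⟨s, hs, hsf⟩ := ih (splitMinimal_fst_subset_of_subset (by simp) _ hf)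
        refine ⟨s, ?_, hsf⟩
        rw [splitMinimal_cons_of_not_forall h]
        simp only [mem_append, mem_cons] at hs ⊢
        rcases hs with (rfl | hs) | hs
        · exact absurd hsf hna
        · exact Or.inl hs
        · exact Or.inr hs

theorem prod_map_splitMinimal {M : Type*} [Monoid M] (g : α → M)
    (hg : ∀ a b, ¬ r a b → Commute (g a) (g b)) (seen l : List α) :
    (l.map g).prod =
      ((splitMinimal r seen l).1.map g).prod * ((splitMinimal r seen l).2.map g).prod := by
  induction l generalizing seen with
  | nil => simp [splitMinimal]
  | cons a t ih =>
    by_cases h : ∀ x ∈ seen, ¬ r x a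
    · simp only [splitMinimal_cons_of_forall h, map_cons, prod_cons, ih (a :: seen), mul_assoc]
    · have hcomm : Commute (g a) ((splitMinimal r (a :: seen) t).1.map g).prod :=
        Commute.list_prod_right _ _ fun y hy => by
          obtain ⟨b, hb, rfl⟩ := mem_map.mp hy
          exact hg a b (not_rel_of_mem_splitMinimal_fst hb a mem_cons_self)
      simp only [splitMinimal_cons_of_not_forall h, map_cons, prod_cons, ih (a :: seen),
        ← mul_assoc, hcomm.eq]

end List

section Coxeter

variable {B W : Type*} {M : CoxeterMatrix B} [Group W] {cs : CoxeterSystem M W}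

theorem CoxeterSystem.IsReduced.of_wordProd_eq {ω ω' : List B} (hω : cs.IsReduced ω)
    (hπ : cs.wordProd ω' = cs.wordProd ω) (hl : ω'.length = ω.length) : cs.IsReduced ω' := by
  rw [CoxeterSystem.IsReduced, hπ, hl]
  exact hω

theorem CoxeterSystem.not_isReduced_append_cons_append_cons {x g z : List B} {i : B}
    (h : Commute (cs.simple i) (cs.wordProd g)) : ¬ cs.IsReduced (x ++ i :: (g ++ i :: z)) := by
  intro hred
  have hπ : cs.wordProd (x ++ i :: (g ++ i :: z)) = cs.wordProd (x ++ g ++ z) := by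
    simp only [cs.wordProd_append, cs.wordProd_cons, ← mul_assoc, h.eq]
    simp only [mul_assoc, cs.simple_mul_simple_cancel_left]
  have := cs.length_wordProd_le (x ++ g ++ z)
  rw [← hπ, hred] at this
  simp at this

theorem FullyCommutative.inv {w : W} (hw : FullyCommutative cs w) : FullyCommutative cs w⁻¹ := by
  rintro ω hω hπ ⟨l₁, l₂, i, j, hij, rfl⟩
  exact hw _ hω.reverse (by rw [cs.wordProd_reverse, hπ, inv_inv])
    ⟨l₂.reverse, l₁.reverse, i, j, hij, by simp⟩

/-- `v` is the minimal element of the coset `⟨s_i, s_j⟩ w`, so the left star operation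
`w ↦ s_j v` decreases length. -/
def LeftStarReducible (cs : CoxeterSystem M W) (w : W) : Prop :=
  ∃ (i j : B) (v : W), M i j = 3 ∧ ¬ cs.IsLeftDescent v i ∧ ¬ cs.IsLeftDescent v j ∧
    w = cs.simple i * cs.simple j * v ∧ cs.length w = cs.length v + 2

def RightStarReducible (cs : CoxeterSystem M W) (w : W) : Prop :=
  ∃ (i j : B) (v : W), M i j = 3 ∧ ¬ cs.IsRightDescent v i ∧ ¬ cs.IsRightDescent v j ∧
    w = v * cs.simple j * cs.simple i ∧ cs.length w = cs.length v + 2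

theorem rightStarReducible_of_leftStarReducible_inv {w : W} (h : LeftStarReducible cs w⁻¹) :
    RightStarReducible cs w := by
  obtain ⟨i, j, v, hij, hi, hj, hw, hl⟩ := h
  refine ⟨i, j, v⁻¹, hij, by rwa [cs.isRightDescent_inv_iff], by rwa [cs.isRightDescent_inv_iff],
    ?_, by rw [← cs.length_inv w, hl, cs.length_inv]⟩
  rw [← inv_inv w, hw]
  simp only [mul_inv_rev, cs.inv_simple, mul_assoc]

/-- If `i` were a left descent of `v`, then `w` would have a reduced word `i j i ⋯`. -/
theorem leftStarReducible_of_isReduced {i j : B} {τ : List B}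
    (hw : FullyCommutative cs (cs.wordProd (i :: j :: τ))) (hred : cs.IsReduced (i :: j :: τ))
    (hij : M i j = 3) : LeftStarReducible cs (cs.wordProd (i :: j :: τ)) := by
  have hτ : cs.IsReduced τ := by simpa using hred.drop 2
  have hjτ : cs.IsReduced (j :: τ) := by simpa using hred.drop 1
  rw [CoxeterSystem.IsReduced] at hτ
  rw [CoxeterSystem.IsReduced, List.length_cons] at hjτ
  have hijτ : cs.length (cs.wordProd (i :: j :: τ)) = τ.length + 2 := hred
  refine ⟨i, j, cs.wordProd τ, hij, fun hdesc => ?_, fun hdesc => ?_,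
    by simp only [cs.wordProd_cons, mul_assoc], by omega⟩
  · obtain ⟨ρ, hρ, hρτ⟩ := cs.exists_isReduced (cs.simple i * cs.wordProd τ)
    have hπ : cs.wordProd (i :: j :: i :: ρ) = cs.wordProd (i :: j :: τ) := by
      simp only [cs.wordProd_cons, ← hρτ, cs.simple_mul_simple_cancel_left]
    have hρlen : ρ.length < τ.length := by
      rw [← hρ.eq, ← hρτ, ← hτ]
      exact hdesc
    have hle := cs.length_wordProd_le (i :: j :: i :: ρ)
    rw [hπ, hijτ] at hle
    refine hw _ (hred.of_wordProd_eq hπ ?_) hπ ⟨[], ρ, i, j, hij, rfl⟩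
    simp only [List.length_cons] at hle ⊢
    omega
  · rw [CoxeterSystem.IsLeftDescent, ← cs.wordProd_cons, hjτ, hτ] at hdesc
    omega

theorem rightStarReducible_of_isReduced {i j : B} {τ : List B}
    (hw : FullyCommutative cs (cs.wordProd (τ ++ [j, i]))) (hred : cs.IsReduced (τ ++ [j, i]))
    (hij : M i j = 3) : RightStarReducible cs (cs.wordProd (τ ++ [j, i])) := by
  apply rightStarReducible_of_leftStarReducible_inv
  have hrev : (τ ++ [j, i]).reverse = i :: j :: τ.reverse := by simp
  have hinv := hw.inv
  rw [← cs.wordProd_reverse, hrev] at hinv ⊢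
  exact leftStarReducible_of_isReduced hinv (by rw [← hrev]; exact hred.reverse) hij

end Coxeter

namespace AffineA

variable {n : ℕ}

/-- The dependence relation of the trace monoid: `s_i` and `s_j` are equal or do not commute. -/
def Dependent (i j : ZMod n) : Prop := i = j ∨ i = j + 1 ∨ j = i + 1

instance (i j : ZMod n) : Decidable (Dependent i j) := by
  unfold Dependent; infer_instance

theorem Dependent.symm {i j : ZMod n} (h : Dependent i j) : Dependent j i := by
  unfold Dependent at *; tauto

theorem dependent_rfl {i : ZMod n} : Dependent i i := Or.inl rfl

theorem dependent_add_one (i : ZMod n) : Dependent i (i + 1) := Or.inr (Or.inr rfl)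

theorem dependent_sub_one (i : ZMod n) : Dependent i (i - 1) :=
  Or.inr (Or.inl (sub_add_cancel i 1).symm)

theorem Dependent.eq_or_eq_add_one_or_eq_sub_one {i j : ZMod n} (h : Dependent i j) :
    j = i ∨ j = i + 1 ∨ j = i - 1 := by
  rcases h with rfl | rfl | rfl
  · exact Or.inl rfl
  · exact Or.inr (Or.inr (add_sub_cancel_right j 1).symm)
  · exact Or.inr (Or.inl rfl)

theorem self_ne_add_one [Fact (1 < n)] (i : ZMod n) : i ≠ i + 1 := by simp

theorem self_ne_sub_one [Fact (1 < n)] (i : ZMod n) : i ≠ i - 1 := fun h =>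
  self_ne_add_one (i - 1) (by rw [sub_add_cancel]; exact h.symm)

def Independent (E : List (ZMod n)) : Prop := E.Pairwise fun i j => ¬ Dependent i j

instance : Std.Symm fun i j : ZMod n => ¬ Dependent i j := ⟨fun _ _ h h' => h h'.symm⟩

theorem Independent.not_dependent_of_eq_append_cons {E A B : List (ZMod n)} {x : ZMod n}
    (hE : Independent E) (h : E = A ++ x :: B) : ∀ y ∈ A ++ B, ¬ Dependent x y := by
  subst h
  simp only [Independent, List.pairwise_append, List.pairwise_cons, List.mem_cons] at hE
  intro y hy
  rcases List.mem_append.mp hy with hy | hy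
  · exact fun hxy => hE.2.2 y hy x (Or.inl rfl) hxy.symm
  · exact hE.2.1.1 y hy

theorem Independent.not_dependent {E : List (ZMod n)} {x y : ZMod n} (hE : Independent E)
    (hx : x ∈ E) (hy : y ∈ E) (hxy : x ≠ y) : ¬ Dependent x y :=
  hE.forall hx hy hxy

theorem Independent.nodup {E : List (ZMod n)} (hE : Independent E) : E.Nodup :=
  hE.imp fun {a _} h (hab : a = _) => h (hab ▸ dependent_rfl)

theorem Independent.add_one_not_mem [Fact (1 < n)] {E : List (ZMod n)} {x : ZMod n}
    (hE : Independent E) (hx : x ∈ E) : x + 1 ∉ E := fun hx' =>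
  hE.not_dependent hx hx' (self_ne_add_one x) (dependent_add_one x)

theorem Independent.not_dependent_add_one [Fact (1 < n)] {F : List (ZMod n)} {e y : ZMod n}
    (hF : Independent F) (he : e ∈ F) (he₂ : e + 2 ∉ F) (hy : y ∈ F) (hye : y ≠ e) :
    ¬ Dependent (e + 1) y := by
  intro h
  rcases h.eq_or_eq_add_one_or_eq_sub_one with rfl | rfl | rfl
  · exact hF.add_one_not_mem he hy
  · exact he₂ (by rwa [add_assoc, one_add_one_eq_two] at hy)
  · exact hye (add_sub_cancel_right e 1)

def Covers (E F : List (ZMod n)) : Prop := ∀ f ∈ F, f - 1 ∈ E ∧ f + 1 ∈ E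

theorem eq_of_dependent_of_dependent {E : List (ZMod n)} {f s y : ZMod n}
    (hmiss : ¬ (f - 1 ∈ E ∧ f + 1 ∈ E)) (hfE : f ∉ E) (hs : s ∈ E) (hy : y ∈ E)
    (hfs : Dependent f s) (hfy : Dependent f y) : y = s := by
  by_contra hys
  apply hmiss
  rcases hfs.eq_or_eq_add_one_or_eq_sub_one with rfl | rfl | rfl <;>
    rcases hfy.eq_or_eq_add_one_or_eq_sub_one with rfl | rfl | rfl <;>
    first
      | exact absurd hs hfE
      | exact absurd hy hfE
      | exact absurd rfl hys
      | exact ⟨hy, hs⟩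
      | exact ⟨hs, hy⟩

def firstLayer (ω : List (ZMod n)) : List (ZMod n) := (List.splitMinimal Dependent [] ω).1

def restLayers (ω : List (ZMod n)) : List (ZMod n) := (List.splitMinimal Dependent [] ω).2

theorem independent_firstLayer (ω : List (ZMod n)) : Independent (firstLayer ω) :=
  List.pairwise_splitMinimal_fst (r := Dependent) [] ω

theorem firstLayer_ne_nil {ω : List (ZMod n)} (hω : ω ≠ []) : firstLayer ω ≠ [] :=
  List.splitMinimal_fst_ne_nil (r := Dependent) hω

theorem length_firstLayer_add_length_restLayers (ω : List (ZMod n)) :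
    (firstLayer ω).length + (restLayers ω).length = ω.length :=
  List.length_splitMinimal (r := Dependent) [] ω

theorem exists_eq_append_cons_of_mem_firstLayer {ω : List (ZMod n)} {f : ZMod n}
    (hf : f ∈ firstLayer ω) : ∃ C D, ω = C ++ f :: D ∧ ∀ y ∈ C, ¬ Dependent y f :=
  List.exists_eq_append_cons_of_mem_splitMinimal_fst (r := Dependent) hf

theorem exists_dependent_of_mem_firstLayer_restLayers {ω : List (ZMod n)} {f : ZMod n}
    (hf : f ∈ firstLayer (restLayers ω)) : ∃ s ∈ firstLayer ω, Dependent s f := by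
  simpa [firstLayer] using List.exists_rel_of_mem_splitMinimal_snd (r := Dependent) hf

section Parity

def parity (hev : Even n) : ZMod n →+* ZMod 2 := ZMod.castHom hev.two_dvd (ZMod 2)

theorem parity_natCast_eq_iff (hev : Even n) (k : ℕ) (b : Bool) :
    parity hev k = b.toNat ↔ k % 2 = b.toNat := by
  rw [map_natCast, ZMod.natCast_eq_natCast_iff']
  cases b <;> simp

variable [NeZero n]

theorem mem_parityGenSet_iff (hev : Even n) {x : ZMod n} {b : Bool} :
    x ∈ parityGenSet n b ↔ parity hev x = b.toNat := by
  constructor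
  · rintro ⟨k, -, hk, rfl⟩
    exact (parity_natCast_eq_iff hev k b).mpr hk
  · intro h
    refine ⟨x.val, x.val_lt, ?_, ZMod.natCast_zmod_val x⟩
    rwa [← parity_natCast_eq_iff hev, ZMod.natCast_zmod_val]

theorem add_one_mem_parityGenSet_not_iff (hev : Even n) {x : ZMod n} {b : Bool} :
    x + 1 ∈ parityGenSet n (!b) ↔ x ∈ parityGenSet n b := by
  rw [mem_parityGenSet_iff hev, mem_parityGenSet_iff hev, map_add, map_one]
  generalize parity hev x = p
  cases b <;> revert p <;> decide

theorem mem_parityGenSet_or_mem_parityGenSet_not (hev : Even n) (x : ZMod n) (b : Bool) :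
    x ∈ parityGenSet n b ∨ x ∈ parityGenSet n (!b) := by
  rw [mem_parityGenSet_iff hev, mem_parityGenSet_iff hev]
  generalize parity hev x = p
  cases b <;> revert p <;> decide

theorem exists_eq_add_two_mul_of_parity_eq (hev : Even n) {x y : ZMod n}
    (h : parity hev x = parity hev y) : ∃ m : ℕ, y = x + 2 * m := by
  have h0 : parity hev ((y - x).val : ZMod n) = 0 := by
    rw [ZMod.natCast_zmod_val, map_sub, h, sub_self]
  rw [map_natCast, ZMod.natCast_eq_zero_iff] at h0
  obtain ⟨m, hm⟩ := h0
  refine ⟨m, ?_⟩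
  rw [← sub_eq_iff_eq_add', ← ZMod.natCast_zmod_val (y - x), hm]
  push_cast
  ring

theorem eq_parityGenSet_not_of_add_one_mem (hev : Even n) {S : Set (ZMod n)} {b : Bool}
    (hS : ∀ x ∈ S, x + 1 ∉ S) (hsub : ∀ x ∈ parityGenSet n b, x + 1 ∈ S) :
    S = parityGenSet n (!b) := by
  ext y
  constructor
  · intro hy
    refine (mem_parityGenSet_or_mem_parityGenSet_not hev y (!b)).resolve_right fun hyb => ?_
    rw [Bool.not_not] at hyb
    exact hS y hy (hsub y hyb)
  · intro hy
    have : y - 1 ∈ parityGenSet n b := by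
      rwa [← add_one_mem_parityGenSet_not_iff hev, sub_add_cancel]
    simpa using hsub _ this

/-- For odd `n`, `2` is a unit, so `S` would contain two adjacent elements. -/
theorem even_and_eq_parityGenSet_of_add_two_mem {S : Set (ZMod n)}
    (hS₁ : ∀ x ∈ S, x + 1 ∉ S) (hS₂ : ∀ x ∈ S, x + 2 ∈ S) (hne : S.Nonempty) :
    Even n ∧ ∃ b, S = parityGenSet n b := by
  obtain ⟨e, he⟩ := hne
  have hall : ∀ m : ℕ, e + 2 * m ∈ S := by
    intro m
    induction m with
    | zero => simpa using he
    | succ m ih => simpa [mul_add, add_assoc] using hS₂ _ ih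
  rcases Nat.even_or_odd n with hev | ⟨k, hk⟩
  · refine ⟨hev, ?_⟩
    obtain ⟨b, hb⟩ : ∃ b, e ∈ parityGenSet n (!b) :=
      (mem_parityGenSet_or_mem_parityGenSet_not hev e true).elim (⟨false, ·⟩) (⟨true, ·⟩)
    refine ⟨!b, eq_parityGenSet_not_of_add_one_mem hev hS₁ fun x hx => ?_⟩
    have hx₁ := (add_one_mem_parityGenSet_not_iff hev).mpr hx
    rw [mem_parityGenSet_iff hev] at hx₁ hb
    obtain ⟨m, hm⟩ := exists_eq_add_two_mul_of_parity_eq hev (hb.trans hx₁.symm)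
    rw [hm]
    exact hall m
  · refine absurd ?_ (hS₁ e he)
    have h2 : 2 * ((k + 1 : ℕ) : ZMod n) = 1 := by
      have hn : ((2 * k + 1 : ℕ) : ZMod n) = 0 := by rw [← hk, ZMod.natCast_self]
      push_cast at hn ⊢
      linear_combination hn
    simpa only [h2] using hall (k + 1)

end Parity

section Coxeter

variable {W : Type*} {M : CoxeterMatrix (ZMod n)} [Group W]

theorem M_eq_two_of_not_dependent (hM : IsAffineAMatrix n M) {i j : ZMod n}
    (h : ¬ Dependent i j) : M i j = 2 := by
  simp only [Dependent, not_or] at h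
  rw [hM, if_neg h.1, if_neg (not_or.mpr h.2)]

theorem M_eq_three_of_dependent_of_ne (hM : IsAffineAMatrix n M) {i j : ZMod n}
    (h : Dependent i j) (hij : i ≠ j) : M i j = 3 := by
  rw [hM, if_neg hij, if_pos (h.resolve_left hij)]

variable (hM : IsAffineAMatrix n M) (cs : CoxeterSystem M W)
include hM

theorem commute_simple_of_not_dependent {i j : ZMod n} (h : ¬ Dependent i j) :
    Commute (cs.simple i) (cs.simple j) := by
  have h2 := cs.simple_mul_simple_pow i j
  rw [M_eq_two_of_not_dependent hM h, pow_two, ← mul_assoc, mul_eq_one_iff_eq_inv,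
    cs.inv_simple] at h2
  calc cs.simple i * cs.simple j
      = cs.simple i * cs.simple j * cs.simple i * cs.simple i := by
        rw [mul_assoc _ (cs.simple i), cs.simple_mul_simple_self, mul_one]
    _ = cs.simple j * cs.simple i := by rw [h2]

theorem commute_simple_wordProd {a : ZMod n} {B : List (ZMod n)}
    (h : ∀ y ∈ B, ¬ Dependent a y) : Commute (cs.simple a) (cs.wordProd B) :=
  Commute.list_prod_right _ _ fun _ hy => by
    obtain ⟨b, hb, rfl⟩ := List.mem_map.mp hy
    exact commute_simple_of_not_dependent hM cs (h b hb)

theorem wordProd_append_append_cons {a : ZMod n} {A B C : List (ZMod n)}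
    (h : ∀ y ∈ B, ¬ Dependent a y) :
    cs.wordProd (A ++ (B ++ a :: C)) = cs.wordProd (A ++ a :: (B ++ C)) := by
  simp only [cs.wordProd_append, cs.wordProd_cons]
  rw [← mul_assoc (cs.wordProd B), ← (commute_simple_wordProd hM cs h).eq, mul_assoc]

theorem wordProd_append_cons_append_cons_append_cons {f a : ZMod n} {x g₁ g₂ z : List (ZMod n)}
    (h₁ : ∀ y ∈ g₁, ¬ Dependent f y) (h₂ : ∀ y ∈ g₂, ¬ Dependent f y) :
    cs.wordProd (x ++ f :: (g₁ ++ a :: (g₂ ++ f :: z))) =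
      cs.wordProd (x ++ g₁ ++ [f, a, f] ++ (g₂ ++ z)) := by
  have e₁ := wordProd_append_append_cons hM cs h₁ (A := x) (C := a :: (g₂ ++ f :: z))
  have e₂ := wordProd_append_append_cons hM cs h₂ (A := x ++ g₁ ++ [f, a]) (C := z)
  simp only [List.append_assoc, List.cons_append, List.nil_append] at e₁ e₂ ⊢
  exact e₁.symm.trans e₂

theorem wordProd_append_cons_append_append_cons {s f : ZMod n} {A B C D : List (ZMod n)}
    (hs : ∀ y ∈ A, ¬ Dependent s y) (hf : ∀ y ∈ A ++ B ++ C, ¬ Dependent f y) :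
    cs.wordProd (A ++ s :: B ++ (C ++ f :: D)) = cs.wordProd (s :: f :: (A ++ B ++ C ++ D)) := by
  have e₁ := wordProd_append_append_cons hM cs hs (A := []) (C := B ++ C ++ f :: D)
  have e₂ := wordProd_append_append_cons hM cs hf (A := [s]) (C := D)
  simp only [List.append_assoc, List.cons_append, List.nil_append] at e₁ e₂ ⊢
  exact e₁.trans e₂

theorem wordProd_append_append_cons_append_append_cons {x e : ZMod n}
    {P A B F₁ F₂ : List (ZMod n)} (hx : ∀ y ∈ B ++ F₁ ++ F₂, ¬ Dependent x y)
    (he : ∀ y ∈ F₂, ¬ Dependent e y) :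
    cs.wordProd (P ++ (A ++ x :: B) ++ (F₁ ++ e :: F₂)) =
      cs.wordProd (P ++ A ++ B ++ F₁ ++ F₂ ++ [x, e]) := by
  have e₁ := wordProd_append_append_cons hM cs he (A := P ++ A ++ x :: B ++ F₁) (C := [])
  have e₂ := wordProd_append_append_cons hM cs hx (A := P ++ A) (C := [e])
  simp only [List.append_assoc, List.cons_append, List.append_nil] at e₁ e₂ ⊢
  exact e₁.symm.trans e₂.symm

theorem wordProd_firstLayer_append_restLayers (ω : List (ZMod n)) :
    cs.wordProd (firstLayer ω ++ restLayers ω) = cs.wordProd ω := by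
  rw [cs.wordProd_append]
  exact (List.prod_map_splitMinimal (r := Dependent) cs.simple
    (fun _ _ h => commute_simple_of_not_dependent hM cs h) [] ω).symm

theorem wordProd_append_firstLayer_append_restLayers (P ω : List (ZMod n)) :
    cs.wordProd (P ++ firstLayer ω ++ restLayers ω) = cs.wordProd (P ++ ω) := by
  rw [List.append_assoc, cs.wordProd_append, wordProd_firstLayer_append_restLayers hM,
    cs.wordProd_append]

theorem isReduced_append_firstLayer_append_restLayers {P ω : List (ZMod n)}
    (hred : cs.IsReduced (P ++ ω)) : cs.IsReduced (P ++ firstLayer ω ++ restLayers ω) := by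
  refine hred.of_wordProd_eq (wordProd_append_firstLayer_append_restLayers hM cs P ω) ?_
  simp only [List.length_append, ← length_firstLayer_add_length_restLayers ω]
  omega

/-- Otherwise the two occurrences of `f` are separated only by letters commuting with `f`. -/
theorem not_mem_of_isReduced {P E C D : List (ZMod n)} {f : ZMod n}
    (hred : cs.IsReduced (P ++ E ++ (C ++ f :: D))) (hE : Independent E)
    (hC : ∀ y ∈ C, ¬ Dependent y f) : f ∉ E := by
  intro hf
  obtain ⟨G, H, rfl⟩ := List.append_of_mem hf
  have hfH := hE.not_dependent_of_eq_append_cons rfl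
  refine cs.not_isReduced_append_cons_append_cons (x := P ++ G) (g := H ++ C) (z := D)
    (commute_simple_wordProd hM cs fun y hy => ?_) (by simpa using hred)
  rcases List.mem_append.mp hy with hy | hy
  · exact hfH y (List.mem_append_right _ hy)
  · exact fun h => hC y hy h.symm

/-- A letter `f` of the second layer with only one neighbour `s` in the first layer can be
brought, together with `s`, to the front of the word. -/
theorem leftStarReducible_of_not_covers {ω : List (ZMod n)}
    (hw : FullyCommutative cs (cs.wordProd ω)) (hred : cs.IsReduced ω)
    (hcov : ¬ Covers (firstLayer ω) (firstLayer (restLayers ω))) :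
    LeftStarReducible cs (cs.wordProd ω) := by
  obtain ⟨f, hf, hmiss⟩ : ∃ f ∈ firstLayer (restLayers ω),
      ¬ (f - 1 ∈ firstLayer ω ∧ f + 1 ∈ firstLayer ω) := by simpa [Covers] using hcov
  obtain ⟨s, hs, hsf⟩ := exists_dependent_of_mem_firstLayer_restLayers hf
  obtain ⟨C, D, hCD, hC⟩ := exists_eq_append_cons_of_mem_firstLayer hf
  have hred' := isReduced_append_firstLayer_append_restLayers hM cs (P := []) hred
  rw [hCD] at hred'
  have hfE : f ∉ firstLayer ω :=
    not_mem_of_isReduced hM cs (P := []) hred' (independent_firstLayer ω) hC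
  have hsf' : s ≠ f := fun h => hfE (h ▸ hs)
  obtain ⟨A, B, hAB⟩ := List.append_of_mem hs
  have hsAB := (independent_firstLayer ω).not_dependent_of_eq_append_cons hAB
  have hfABC : ∀ y ∈ A ++ B ++ C, ¬ Dependent f y := by
    intro y hy hfy
    rcases List.mem_append.mp hy with hy | hy
    · have hyE : y ∈ firstLayer ω := by rw [hAB]; simp at hy ⊢; tauto
      exact hsAB y hy (eq_of_dependent_of_dependent hmiss hfE hs hyE hsf.symm hfy ▸ dependent_rfl)
    · exact hC y hy hfy.symm
  have hπ : cs.wordProd (s :: f :: (A ++ B ++ C ++ D)) = cs.wordProd ω := by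
    rw [← wordProd_firstLayer_append_restLayers hM cs ω, hAB, hCD,
      wordProd_append_cons_append_append_cons hM cs
        (fun y hy => hsAB y (List.mem_append_left _ hy)) hfABC]
  have hlen := length_firstLayer_add_length_restLayers ω
  rw [hAB, hCD] at hlen
  rw [← hπ] at hw ⊢
  exact leftStarReducible_of_isReduced hw
    (hred.of_wordProd_eq hπ (by simp only [List.length_append, List.length_cons] at hlen ⊢; omega))
    (M_eq_three_of_dependent_of_ne hM hsf hsf')

theorem wordProd_eq_Iprod {E : List (ZMod n)} {b : Bool} (hE : Independent E)
    (hEb : {x | x ∈ E} = parityGenSet n b) : cs.wordProd E = Iprod cs b := by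
  have hnodup : (((List.range n).filter fun k => k % 2 = b.toNat).map
      (Nat.cast : ℕ → ZMod n)).Nodup := by
    refine (List.nodup_range.filter _).map_on fun a ha c hc hac => ?_
    have := congrArg ZMod.val hac
    simp only [List.mem_filter, List.mem_range] at ha hc
    rwa [ZMod.val_natCast, ZMod.val_natCast, Nat.mod_eq_of_lt ha.1, Nat.mod_eq_of_lt hc.1] at this
  have hperm := (List.perm_ext_iff_of_nodup hE.nodup hnodup).mpr fun x => by
    rw [show x ∈ E ↔ x ∈ parityGenSet n b from Set.ext_iff.mp hEb x]
    simp [parityGenSet, and_assoc]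
  exact (hperm.map cs.simple).prod_eq' <|
    List.Pairwise.map _ (fun _ _ h => commute_simple_of_not_dependent hM cs h) hE

variable [Fact (1 < n)]

/-- If `f + ε` does not occur, then two occurrences of `f - ε` would enclose a shorter
counterexample, a single one could be brought next to both `f`s to form a factor
`f (f - ε) f`, and without one the two `f`s would cancel. -/
theorem add_mem_of_isReduced_of_not_mem {L x g z : List (ZMod n)} {f ε : ZMod n}
    (hε : ε = 1 ∨ ε = -1) (hw : FullyCommutative cs (cs.wordProd L)) (hred : cs.IsReduced L)
    (hL : L = x ++ f :: (g ++ f :: z)) (hf : f ∉ g) : f + ε ∈ g := by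
  induction hlen : g.length using Nat.strong_induction_on generalizing x g z f with
  | _ k ih =>
  by_contra hfε
  have hdep : ∀ y ∈ g, Dependent f y → y = f - ε := by
    intro y hy hfy
    rcases hfy.eq_or_eq_add_one_or_eq_sub_one with rfl | rfl | rfl
    · exact absurd hy hf
    · rcases hε with rfl | rfl
      · exact absurd hy hfε
      · ring
    · rcases hε with rfl | rfl
      · rfl
      · exact absurd hy (by rwa [← sub_eq_add_neg] at hfε)
  by_cases hm : f - ε ∈ g
  · obtain ⟨g₁, g₂, hg₁, rfl, -⟩ := List.exists_erase_eq hm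
    by_cases hm₂ : f - ε ∈ g₂
    · obtain ⟨g₃, g₄, hg₃, rfl, -⟩ := List.exists_erase_eq hm₂
      have hf₃ : f - ε + ε ∈ g₃ :=
        ih g₃.length (by simp [← hlen]; omega) (x := x ++ f :: g₁) (z := g₄ ++ f :: z)
          (by rw [hL]; simp) (by simpa using hg₃) rfl
      rw [sub_add_cancel] at hf₃
      exact hf (by simp [hf₃])
    · have hg₁f : ∀ y ∈ g₁, ¬ Dependent f y := fun y hy h => hg₁ (hdep y (by simp [hy]) h ▸ hy)
      have hg₂f : ∀ y ∈ g₂, ¬ Dependent f y := fun y hy h => hm₂ (hdep y (by simp [hy]) h ▸ hy)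
      have hπ : cs.wordProd (x ++ g₁ ++ [f, f - ε, f] ++ (g₂ ++ z)) = cs.wordProd L := by
        rw [hL, List.append_assoc g₁, List.cons_append,
          wordProd_append_cons_append_cons_append_cons hM cs hg₁f hg₂f]
      have hfε' : Dependent f (f - ε) ∧ f ≠ f - ε := by
        rcases hε with rfl | rfl
        · exact ⟨dependent_sub_one f, self_ne_sub_one f⟩
        · rw [sub_neg_eq_add]
          exact ⟨dependent_add_one f, self_ne_add_one f⟩
      exact hw _ (hred.of_wordProd_eq hπ (by simp [hL]; omega)) hπ
        ⟨x ++ g₁, g₂ ++ z, f, f - ε, M_eq_three_of_dependent_of_ne hM hfε'.1 hfε'.2, by simp⟩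
  · exact cs.not_isReduced_append_cons_append_cons (commute_simple_wordProd hM cs
      fun y hy h => hm (hdep y hy h ▸ hy)) (hL ▸ hred)

theorem sub_one_mem_and_add_one_mem_of_isReduced {L x g z : List (ZMod n)} {f : ZMod n}
    (hw : FullyCommutative cs (cs.wordProd L)) (hred : cs.IsReduced L)
    (hL : L = x ++ f :: (g ++ f :: z)) (hf : f ∉ g) : f - 1 ∈ g ∧ f + 1 ∈ g :=
  ⟨by simpa [← sub_eq_add_neg] using
      add_mem_of_isReduced_of_not_mem hM cs (Or.inr rfl) hw hred hL hf,
    add_mem_of_isReduced_of_not_mem hM cs (Or.inl rfl) hw hred hL hf⟩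

/-- A letter `f` of the second layer is blocked by a neighbour in the first layer, hence lies in
`E`; the two occurrences of `f` enclose both `f ± 1`, which can only lie in the first layer. -/
theorem covers_firstLayer_restLayers {P E ω : List (ZMod n)}
    (hw : FullyCommutative cs (cs.wordProd (P ++ E ++ ω))) (hred : cs.IsReduced (P ++ E ++ ω))
    (hE : Independent E) (hcov : Covers E (firstLayer ω)) :
    Covers (firstLayer ω) (firstLayer (restLayers ω)) := by
  intro f hf
  obtain ⟨s, hs, hsf⟩ := exists_dependent_of_mem_firstLayer_restLayers hf
  obtain ⟨C, D, hCD, hC⟩ := exists_eq_append_cons_of_mem_firstLayer hf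
  have hred' := isReduced_append_firstLayer_append_restLayers hM cs (P := P ++ E) hred
  have hw' := wordProd_append_firstLayer_append_restLayers hM cs (P ++ E) ω ▸ hw
  rw [hCD] at hred' hw'
  have hfF : f ∉ firstLayer ω := not_mem_of_isReduced hM cs hred' (independent_firstLayer ω) hC
  have hfE : f ∈ E := by
    rcases hsf.eq_or_eq_add_one_or_eq_sub_one with rfl | rfl | rfl
    · exact absurd hs hfF
    · exact (hcov s hs).2
    · exact (hcov s hs).1
  obtain ⟨G, H, rfl⟩ := List.append_of_mem hfE
  have hfGH := hE.not_dependent_of_eq_append_cons rfl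
  have hfH : ∀ y ∈ H, ¬ Dependent f y := fun y hy => hfGH y (List.mem_append_right _ hy)
  have hnot : f ∉ H ++ firstLayer ω ++ C := by
    simp only [List.mem_append, not_or]
    exact ⟨⟨fun h => hfH f h dependent_rfl, hfF⟩, fun h => hC f h dependent_rfl⟩
  have hmem : ∀ y, Dependent f y → y ∈ H ++ firstLayer ω ++ C → y ∈ firstLayer ω := by
    intro y hfy hy
    rcases List.mem_append.mp hy with hy | hy
    · exact (List.mem_append.mp hy).resolve_left fun h => hfH y h hfy
    · exact absurd hfy.symm (hC y hy)
  obtain ⟨h₁, h₂⟩ := sub_one_mem_and_add_one_mem_of_isReduced hM cs hw' hred'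
    (x := P ++ G) (z := D) (by simp) hnot
  exact ⟨hmem _ (dependent_sub_one f) h₁, hmem _ (dependent_add_one f) h₂⟩

/-- A letter `e` of the last layer with `e + 2 ∉ F` can be brought, together with `e + 1 ∈ E`,
to the end of the word. -/
theorem rightStarReducible_or_eq_parityGenSet {P E F : List (ZMod n)}
    (hw : FullyCommutative cs (cs.wordProd (P ++ E ++ F))) (hred : cs.IsReduced (P ++ E ++ F))
    (hE : Independent E) (hF : Independent F) (hFne : F ≠ []) (hcov : Covers E F) :
    RightStarReducible cs (cs.wordProd (P ++ E ++ F)) ∨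
      Even n ∧ ∃ b, {x | x ∈ F} = parityGenSet n b := by
  by_cases hcl : ∀ e ∈ F, e + 2 ∈ F
  · exact Or.inr (even_and_eq_parityGenSet_of_add_two_mem (fun x hx => hF.add_one_not_mem hx)
      hcl (List.exists_mem_of_ne_nil F hFne))
  left
  obtain ⟨e, he, he₂⟩ : ∃ e ∈ F, e + 2 ∉ F := by simpa using hcl
  obtain ⟨A, B, hAB⟩ := List.append_of_mem (hcov e he).2
  obtain ⟨F₁, F₂, hF₁₂⟩ := List.append_of_mem he
  have heF := hF.not_dependent_of_eq_append_cons hF₁₂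
  have hxB := hE.not_dependent_of_eq_append_cons hAB
  have hxF : ∀ y ∈ F₁ ++ F₂, ¬ Dependent (e + 1) y := fun y hy =>
    hF.not_dependent_add_one he he₂ (by rw [hF₁₂]; simp at hy ⊢; tauto)
      fun h => heF y hy (h ▸ dependent_rfl)
  have hx : ∀ y ∈ B ++ F₁ ++ F₂, ¬ Dependent (e + 1) y := by
    intro y hy
    rcases List.mem_append.mp hy with hy | hy
    · rcases List.mem_append.mp hy with hy | hy
      · exact hxB y (List.mem_append_right _ hy)
      · exact hxF y (List.mem_append_left _ hy)
    · exact hxF y (List.mem_append_right _ hy)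
  have hπ : cs.wordProd (P ++ A ++ B ++ F₁ ++ F₂ ++ [e + 1, e]) = cs.wordProd (P ++ E ++ F) := by
    rw [hAB, hF₁₂, wordProd_append_append_cons_append_append_cons hM cs hx
      fun y hy => heF y (List.mem_append_right _ hy)]
  rw [← hπ] at hw ⊢
  refine rightStarReducible_of_isReduced hw (hred.of_wordProd_eq hπ ?_)
    (M_eq_three_of_dependent_of_ne hM (dependent_add_one e) (self_ne_add_one e))
  rw [hAB, hF₁₂]
  simp only [List.length_append, List.length_cons, List.length_nil]
  omega

/-- Induction on the Cartier–Foata layers: each layer covers the next, the last one is a parity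
class unless a right star reduction appears, and then so is, alternately, every layer before
it. -/
theorem rightStarReducible_or_eq_altProd {P E ω : List (ZMod n)}
    (hw : FullyCommutative cs (cs.wordProd (P ++ E ++ ω))) (hred : cs.IsReduced (P ++ E ++ ω))
    (hE : Independent E) (hω : ω ≠ []) (hcov : Covers E (firstLayer ω)) :
    RightStarReducible cs (cs.wordProd (P ++ E ++ ω)) ∨
      Even n ∧ ∃ b k, {x | x ∈ E} = parityGenSet n b ∧
        cs.wordProd (E ++ ω) = altProd cs b (k + 2) := by
  induction hlen : ω.length using Nat.strong_induction_on generalizing P E ω with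
  | _ m ih =>
  have hred' := isReduced_append_firstLayer_append_restLayers hM cs (P := P ++ E) hred
  have hπ := wordProd_append_firstLayer_append_restLayers hM cs (P ++ E) ω
  have hw' := hπ.symm ▸ hw
  have hF := independent_firstLayer ω
  have hnext : RightStarReducible cs (cs.wordProd (P ++ E ++ ω)) ∨
      Even n ∧ ∃ b k, {x | x ∈ firstLayer ω} = parityGenSet n b ∧
        cs.wordProd (firstLayer ω ++ restLayers ω) = altProd cs b (k + 1) := by
    rw [← hπ]
    by_cases hr : restLayers ω = []
    · simp only [hr, List.append_nil] at hred' hw' ⊢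
      refine (rightStarReducible_or_eq_parityGenSet hM cs hw' hred' hE hF (firstLayer_ne_nil hω)
        hcov).imp_right fun ⟨hev, b, hb⟩ => ⟨hev, b, 0, hb, ?_⟩
      rw [wordProd_eq_Iprod hM cs hF hb]
      simp [altProd]
    · have hlt : (restLayers ω).length < m := by
        have := length_firstLayer_add_length_restLayers ω
        have := List.length_pos_iff.mpr (firstLayer_ne_nil hω)
        omega
      exact (ih _ hlt hw' hred' hF hr (covers_firstLayer_restLayers hM cs hw hred hE hcov)
        rfl).imp_right fun ⟨hev, b, k, hb, h⟩ => ⟨hev, b, k + 1, hb, h⟩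
  rcases hnext with h | ⟨hev, b, k, hb, hprod⟩
  · exact Or.inl h
  have hEb : {x | x ∈ E} = parityGenSet n (!b) :=
    eq_parityGenSet_not_of_add_one_mem hev (fun x hx => hE.add_one_not_mem hx) fun x hx =>
      (hcov x (hb.symm ▸ hx : x ∈ {x | x ∈ firstLayer ω})).2
  refine Or.inr ⟨hev, !b, k, hEb, ?_⟩
  rw [cs.wordProd_append, wordProd_eq_Iprod hM cs hE hEb,
    ← wordProd_firstLayer_append_restLayers hM cs ω, hprod]
  simp [altProd]

end Coxeter

end AffineA

/-- Fan–Green, Proposition 3.1.2: a nontrivial fully commutative element `w` of type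
affine `A_{n-1}` is (i) a product of pairwise commuting distinct generators, or
(ii) `n` is even and `w` is an alternating product of `I₀` and `I₁`, or
(iii) `w = s t v` reduced with `m(s,t) = 3` and `v` a minimal coset representative
(so the left star operation `w ↦ tv` decreases length), or (iv) the right-handed
analogue `w = v t s`. -/
theorem fullyCommutative_four_cases
    {n : ℕ} (hn : 3 ≤ n) {W : Type*} {M : CoxeterMatrix (ZMod n)} [Group W]
    (hM : IsAffineAMatrix n M) (cs : CoxeterSystem M W)
    (w : W) (hw : FullyCommutative cs w) (hne : w ≠ 1) :
    (∃ l : List (ZMod n), l.Nodup ∧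
        (∀ i ∈ l, ∀ j ∈ l, Commute (cs.simple i) (cs.simple j)) ∧ w = cs.wordProd l) ∨
    (Even n ∧ ∃ (b : Bool) (k : ℕ), 1 ≤ k ∧ w = altProd cs b k) ∨
    (∃ (i j : ZMod n) (v : W), M i j = 3 ∧
        ¬ cs.IsLeftDescent v i ∧ ¬ cs.IsLeftDescent v j ∧
        w = cs.simple i * cs.simple j * v ∧ cs.length w = cs.length v + 2) ∨
    (∃ (i j : ZMod n) (v : W), M i j = 3 ∧
        ¬ cs.IsRightDescent v i ∧ ¬ cs.IsRightDescent v j ∧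
        w = v * cs.simple j * cs.simple i ∧ cs.length w = cs.length v + 2) := by
  have : Fact (1 < n) := ⟨by omega⟩
  obtain ⟨ω, hred, rfl⟩ := cs.exists_isReduced w
  have hω : ω ≠ [] := by rintro rfl; exact hne cs.wordProd_nil
  have hπ := AffineA.wordProd_firstLayer_append_restLayers hM cs ω
  have hE := AffineA.independent_firstLayer ω
  by_cases hr : AffineA.restLayers ω = []
  · refine Or.inl ⟨_, hE.nodup, fun i hi j hj => ?_, by rw [← hπ, hr, List.append_nil]⟩
    by_cases hij : i = j
    · exact hij ▸ Commute.refl _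
    · exact AffineA.commute_simple_of_not_dependent hM cs (hE.not_dependent hi hj hij)
  by_cases hcov : AffineA.Covers (AffineA.firstLayer ω) (AffineA.firstLayer (AffineA.restLayers ω))
  · have hred' := AffineA.isReduced_append_firstLayer_append_restLayers hM cs (P := []) hred
    rcases AffineA.rightStarReducible_or_eq_altProd hM cs (P := []) (by simpa [hπ] using hw)
      (by simpa using hred') hE hr hcov with h | ⟨hev, b, k, -, hprod⟩
    · rw [List.nil_append, hπ] at h
      exact Or.inr (Or.inr (Or.inr h))
    · exact Or.inr (Or.inl ⟨hev, b, k + 2, by omega, hπ.symm.trans hprod⟩)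
  · exact Or.inr (Or.inr (Or.inl (AffineA.leftStarReducible_of_not_covers hM cs hw hred hcov)))
end
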